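/- arXiv:1210.2511 — 3 statements merged into one kernel-verified Lean document; each statement's English description precedes it below -/
import Mathlib

section
/- Let Λ = {λ_n} be a nondecreasing sequence of positive reals with λ_n/n nonincreasing and ∑_{n=1}^∞ λ_n/n² < ∞. Then every function f : [-1,1]² → ℝ of bounded partial Λ-variation (f ∈ PΛBV) has bounded harmonic variation (f ∈ HBV), i.e., PΛBV ⊂ HBV. -/
open MeasureTheory Set Filter Real

noncomputable section

/-- `p` is the system of orthonormal Legendre polynomials on `[-1,1]`:
degree `n`, positive leading coefficient, orthonormal in `L²([-1,1])`. -/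
def IsOrthonormalLegendre (p : ℕ → Polynomial ℝ) : Prop :=
  (∀ n, (p n).degree = n) ∧ (∀ n, 0 < (p n).leadingCoeff) ∧
  (∀ n m : ℕ, (∫ x in (-1:ℝ)..1, (p n).eval x * (p m).eval x) = if n = m then 1 else 0)

/-- Dirichlet kernel of the Fourier–Legendre system. -/
def LegKernel (p : ℕ → Polynomial ℝ) (n : ℕ) (x s : ℝ) : ℝ :=
  ∑ k ∈ Finset.range n, (p k).eval x * (p k).eval s

/-- A finite collection of nonoverlapping open subintervals of `[-1,1]`. -/
def Nonoverlapping (n : ℕ) (a b : Fin n → ℝ) : Prop :=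
  (∀ i, -1 ≤ a i ∧ a i < b i ∧ b i ≤ 1) ∧
  (∀ i j, i ≠ j → Set.Ioo (a i) (b i) ∩ Set.Ioo (a j) (b j) = ∅)

/-- The set of sums defining `ΛV₁(f; I²)`; the `i`-th interval (1-based) has weight `lam i`. -/
def V1set (lam : ℕ → ℝ) (f : ℝ → ℝ → ℝ) : Set ℝ :=
  {S | ∃ y, y ∈ Set.Icc (-1:ℝ) 1 ∧ ∃ n, ∃ a b : Fin n → ℝ, Nonoverlapping n a b ∧
    S = ∑ i : Fin n, |f (b i) y - f (a i) y| / lam (i.1 + 1)}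

/-- The set of sums defining `ΛV₂(f; I²)`. -/
def V2set (lam : ℕ → ℝ) (f : ℝ → ℝ → ℝ) : Set ℝ :=
  {S | ∃ x, x ∈ Set.Icc (-1:ℝ) 1 ∧ ∃ m, ∃ c d : Fin m → ℝ, Nonoverlapping m c d ∧
    S = ∑ j : Fin m, |f x (d j) - f x (c j)| / lam (j.1 + 1)}

/-- The set of sums defining the mixed variation `(Λ¹,Λ²)V_{1,2}(f; I²)`. -/
def V12set (lam1 lam2 : ℕ → ℝ) (f : ℝ → ℝ → ℝ) : Set ℝ :=
  {S | ∃ n, ∃ a b : Fin n → ℝ, ∃ m, ∃ c d : Fin m → ℝ,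
    Nonoverlapping n a b ∧ Nonoverlapping m c d ∧
    S = ∑ i : Fin n, ∑ j : Fin m,
      |f (a i) (c j) - f (a i) (d j) - f (b i) (c j) + f (b i) (d j)| /
        (lam1 (i.1 + 1) * lam2 (j.1 + 1))}

/-- The harmonic sequence `λ_n = n`. -/
def harm : ℕ → ℝ := fun k => (k : ℝ)

/-- `f ∈ ΛBV`. -/
def LambdaBV (lam : ℕ → ℝ) (f : ℝ → ℝ → ℝ) : Prop :=
  BddAbove (V1set lam f) ∧ BddAbove (V2set lam f) ∧ BddAbove (V12set lam lam f)

/-- `f ∈ PΛBV`. -/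
def PLambdaBV (lam : ℕ → ℝ) (f : ℝ → ℝ → ℝ) : Prop :=
  BddAbove (V1set lam f) ∧ BddAbove (V2set lam f)

/-- Bounded harmonic variation. -/
def HBV (f : ℝ → ℝ → ℝ) : Prop := LambdaBV harm f

/-- Continuity in harmonic variation: all tail variations (weights shifted by `n`) tend to 0. -/
def CHV (f : ℝ → ℝ → ℝ) : Prop :=
  Tendsto (fun n : ℕ => sSup (V1set (fun k => ((k + n : ℕ) : ℝ)) f)) atTop (nhds 0) ∧
  Tendsto (fun n : ℕ => sSup (V2set (fun k => ((k + n : ℕ) : ℝ)) f)) atTop (nhds 0) ∧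
  Tendsto (fun n : ℕ => sSup (V12set (fun k => ((k + n : ℕ) : ℝ)) harm f)) atTop (nhds 0) ∧
  Tendsto (fun n : ℕ => sSup (V12set harm (fun k => ((k + n : ℕ) : ℝ)) f)) atTop (nhds 0)

/-- Partial modulus of variation in the first variable. -/
def v1 (f : ℝ → ℝ → ℝ) (n : ℕ) : ℝ :=
  sSup {S | ∃ y, y ∈ Set.Icc (-1:ℝ) 1 ∧ ∃ a b : Fin n → ℝ, Nonoverlapping n a b ∧
    S = ∑ i : Fin n, |f (b i) y - f (a i) y|}

/-- Partial modulus of variation in the second variable. -/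
def v2 (f : ℝ → ℝ → ℝ) (m : ℕ) : ℝ :=
  sSup {S | ∃ x, x ∈ Set.Icc (-1:ℝ) 1 ∧ ∃ c d : Fin m → ℝ, Nonoverlapping m c d ∧
    S = ∑ j : Fin m, |f x (d j) - f x (c j)|}

/-- Partial modulus of continuity in the first variable. -/
def omega1 (f : ℝ → ℝ → ℝ) (δ : ℝ) : ℝ :=
  sSup {d | ∃ x s y : ℝ, x ∈ Set.Icc (-1:ℝ) 1 ∧ s ∈ Set.Icc (-1:ℝ) 1 ∧
    y ∈ Set.Icc (-1:ℝ) 1 ∧ |x - s| ≤ δ ∧ d = |f x y - f s y|}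

/-- Fourier–Legendre coefficient. -/
def Fcoef (p : ℕ → Polynomial ℝ) (f : ℝ → ℝ → ℝ) (n m : ℕ) : ℝ :=
  ∫ s in (-1:ℝ)..1, ∫ t in (-1:ℝ)..1, f s t * (p n).eval s * (p m).eval t

/-- Rectangular partial sum of the double Fourier–Legendre series. -/
def FLSum (p : ℕ → Polynomial ℝ) (f : ℝ → ℝ → ℝ) (N M : ℕ) (x y : ℝ) : ℝ :=
  ∑ n ∈ Finset.range N, ∑ m ∈ Finset.range M, Fcoef p f n m * (p n).eval x * (p m).eval y

/-- Uniform convergence of rectangular partial sums to `f` on `[-1+ε, 1-ε]²`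
as `min(N,M) → ∞`. -/
def UnifConv (p : ℕ → Polynomial ℝ) (f : ℝ → ℝ → ℝ) (ε : ℝ) : Prop :=
  ∀ δ > 0, ∃ N₀ : ℕ, ∀ N M : ℕ, N₀ ≤ N → N₀ ≤ M →
    ∀ x ∈ Set.Icc (-1 + ε) (1 - ε), ∀ y ∈ Set.Icc (-1 + ε) (1 - ε),
      |FLSum p f N M x y - f x y| ≤ δ

/-- Continuity on the square `[-1,1]²`. -/
def ContOnSq (f : ℝ → ℝ → ℝ) : Prop :=
  ContinuousOn (fun z : ℝ × ℝ => f z.1 z.2) (Set.Icc (-1:ℝ) 1 ×ˢ Set.Icc (-1:ℝ) 1)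

/-!
Put `M i j = |f(Δ_i, J_j)|`. Every row and every column of `M`, rearranged in any order, has
`Λ`-weighted sum at most `V = 2 (ΛV₁(f) + ΛV₂(f))`; hence an entry of rank `k` in its row or in its
column is at most `V / (1/λ₁ + ⋯ + 1/λ_k)`. Ranking each entry by the larger of its two ranks, the
entries of rank `≤ q` carry harmonic weight `∑ 1/(ij) = O(log² q)` (at most `q` of them in each row
above the diagonal and in each column below it), so Abel summation bounds `∑ M i j / (ij)` by
`V ∑_q (log q / q) / (1/λ₁ + ⋯ + 1/λ_q)`. Since `λ_n` increases and `λ_n / n` decreases,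
`1/λ₁ + ⋯ + 1/λ_q ≳ (p / λ_p) log q` for `p = ⌊√q⌋`, and grouping the `q` with the same `p`
turns the series into `O(∑ λ_p / p²)`. The one-dimensional harmonic variations are controlled
by `λ_k ≤ λ₁ k`.
-/

open Finset

theorem harmonic_mono : Monotone harmonic := fun _ _ h =>
  sum_le_sum_of_subset_of_nonneg (range_subset_range.2 h) fun _ _ _ => by positivity

theorem harmonic_eq_sum_one_div (q : ℕ) :
    (harmonic q : ℝ) = ∑ k ∈ range q, 1 / ((k : ℝ) + 1) := by
  simp [harmonic]

theorem harmonic_nonneg (q : ℕ) : 0 ≤ (harmonic q : ℝ) := by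
  rw [harmonic_eq_sum_one_div]; positivity

theorem sum_one_div_succ_le_harmonic (s : Finset ℕ) :
    ∑ x ∈ s, 1 / ((x : ℝ) + 1) ≤ harmonic #s := by
  induction s using Finset.induction_on_max with
  | empty => simp
  | insert a s ha ih =>
    have has : a ∉ s := fun h => lt_irrefl a (ha a h)
    have hcard : (#s : ℝ) ≤ a := by
      exact_mod_cast (Finset.card_le_card fun x hx => mem_range.2 (ha x hx)).trans_eq
        (card_range a)
    rw [sum_insert has, card_insert_of_notMem has, harmonic_succ]
    push_cast
    have : 1 / ((a : ℝ) + 1) ≤ ((#s : ℝ) + 1)⁻¹ := by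
      rw [one_div]; gcongr
    linarith

theorem div_succ_le_harmonic (q : ℕ) : (q : ℝ) / (q + 1) ≤ harmonic q := by
  rw [harmonic_eq_sum_one_div, div_eq_mul_one_div]
  simpa using card_nsmul_le_sum (range q) (fun k => 1 / ((k : ℝ) + 1)) (1 / ((q : ℝ) + 1))
    fun k hk => one_div_le_one_div_of_le (by positivity) (by simp at hk; norm_cast; omega)

/-- `H_p ≤ 1 + log p` and `2 log p ≤ log (q + 1) ≤ H_q` give `2 H_p ≤ H_q + 2`. -/
theorem harmonic_add_one_le {p q : ℕ} (hpq : p ^ 2 ≤ q) :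
    (harmonic q : ℝ) + 1 ≤ 3 * (1 + harmonic q - harmonic p) := by
  have hp := harmonic_le_one_add_log p
  have hq := log_add_one_le_harmonic q
  have hlog : 2 * Real.log p ≤ Real.log ↑(q + 1) := by
    rcases p.eq_zero_or_pos with rfl | hp0
    · simp [Real.log_nonneg]
    rw [← Nat.cast_ofNat (R := ℝ) (n := 2), ← Real.log_pow]
    exact Real.log_le_log (by positivity) (by exact_mod_cast (by omega : p ^ 2 ≤ q + 1))
  have hmono : (harmonic p : ℝ) ≤ harmonic q := by
    exact_mod_cast harmonic_mono (Nat.le_self_pow two_ne_zero p |>.trans hpq)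
  linarith

section Weights

variable {lam : ℕ → ℝ}

theorem lam_le_lam (hmono : ∀ n : ℕ, 1 ≤ n → lam n ≤ lam (n + 1)) {p k : ℕ} (hp : 1 ≤ p)
    (hpk : p ≤ k) : lam p ≤ lam k :=
  monotoneOn_nat_Ici_of_le_succ hmono hp (hp.trans hpk) hpk

theorem lam_div_le_lam_div
    (hdec : ∀ n : ℕ, 1 ≤ n → lam (n + 1) / ((n:ℝ) + 1) ≤ lam n / (n:ℝ)) {p k : ℕ} (hp : 1 ≤ p)
    (hpk : p ≤ k) : lam k / k ≤ lam p / p :=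
  antitoneOn_nat_Ici_of_succ_le (f := fun n : ℕ => lam n / n)
    (fun n hn => by push_cast; exact hdec n hn) hp (hp.trans hpk) hpk

theorem one_div_le_lam_one_mul_one_div (hpos : ∀ n : ℕ, 1 ≤ n → 0 < lam n)
    (hdec : ∀ n : ℕ, 1 ≤ n → lam (n + 1) / ((n:ℝ) + 1) ≤ lam n / (n:ℝ)) {k : ℕ} (hk : 1 ≤ k) :
    1 / (k : ℝ) ≤ lam 1 * (1 / lam k) := by
  have h := lam_div_le_lam_div hdec le_rfl hk
  have hlk := hpos k hk
  rw [Nat.cast_one, div_one, div_le_iff₀ (by positivity)] at h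
  rw [mul_one_div, div_le_div_iff₀ (by positivity) hlk]
  linarith

def recipSum (lam : ℕ → ℝ) (q : ℕ) : ℝ := ∑ r ∈ range q, 1 / lam (r + 1)

theorem recipSum_pos (hpos : ∀ n : ℕ, 1 ≤ n → 0 < lam n) {q : ℕ} (hq : 1 ≤ q) :
    0 < recipSum lam q :=
  sum_pos (fun r _ => one_div_pos.2 (hpos _ (by omega))) (nonempty_range_iff.2 (by omega))

theorem recipSum_mono (hpos : ∀ n : ℕ, 1 ≤ n → 0 < lam n) : Monotone (recipSum lam) :=
  fun _ _ h => sum_le_sum_of_subset_of_nonneg (range_subset_range.2 h)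
    fun r _ _ => (one_div_pos.2 (hpos _ (by omega))).le

theorem recipSum_succ_eq_sum_Iic {n : ℕ} (r : Fin n) :
    recipSum lam (r + 1) = ∑ s ∈ Iic r, 1 / lam (s.1 + 1) := by
  rw [recipSum, Nat.range_succ_eq_Iic, ← Fin.map_valEmbedding_Iic, sum_map]
  rfl

/-- The two regimes of `Λ`: below `p` use `λ_r ≤ λ_p`, above `p` use `λ_r / r ≤ λ_p / p`. -/
theorem mul_one_add_harmonic_sub_le_recipSum (hpos : ∀ n : ℕ, 1 ≤ n → 0 < lam n)
    (hmono : ∀ n : ℕ, 1 ≤ n → lam n ≤ lam (n + 1))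
    (hdec : ∀ n : ℕ, 1 ≤ n → lam (n + 1) / ((n:ℝ) + 1) ≤ lam n / (n:ℝ)) {p q : ℕ} (hp : 1 ≤ p)
    (hpq : p ≤ q) :
    (p / lam p) * (1 + harmonic q - harmonic p) ≤ recipSum lam q := by
  have hlp := hpos p hp
  have head : p / lam p ≤ ∑ r ∈ range p, 1 / lam (r + 1) := by
    calc p / lam p = ∑ r ∈ range p, 1 / lam p := by simp [div_eq_mul_inv]
      _ ≤ _ := sum_le_sum fun r hr => one_div_le_one_div_of_le (hpos _ (by omega))
          (lam_le_lam hmono (by omega) (by simp at hr; omega))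
  have tail : (p / lam p) * (harmonic q - harmonic p) ≤ ∑ r ∈ Ico p q, 1 / lam (r + 1) := by
    have : ((harmonic q - harmonic p : ℚ) : ℝ) = ∑ r ∈ Ico p q, 1 / ((r : ℝ) + 1) := by
      simp [harmonic, ← sum_Ico_eq_sub _ hpq]
    push_cast at this
    rw [this, mul_sum]
    refine sum_le_sum fun r hr => ?_
    have hr := (Finset.mem_Ico.1 hr).1
    have hlr := hpos (r + 1) (by omega)
    have := lam_div_le_lam_div hdec hp (show p ≤ r + 1 by omega)
    push_cast at this
    rw [div_le_div_iff₀ (by positivity) (by positivity)] at this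
    rw [div_mul_div_comm, mul_one, div_le_div_iff₀ (by positivity) hlr]
    linarith
  rw [recipSum, ← sum_range_add_sum_Ico _ hpq]
  linarith

theorem one_div_recipSum_le (hpos : ∀ n : ℕ, 1 ≤ n → 0 < lam n)
    (hmono : ∀ n : ℕ, 1 ≤ n → lam n ≤ lam (n + 1))
    (hdec : ∀ n : ℕ, 1 ≤ n → lam (n + 1) / ((n:ℝ) + 1) ≤ lam n / (n:ℝ)) {q : ℕ} (hq : 1 ≤ q) :
    1 / recipSum lam q ≤ 3 * lam (Nat.sqrt q) / (Nat.sqrt q * ((harmonic q : ℝ) + 1)) := by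
  set p := Nat.sqrt q
  have hp : 1 ≤ p := Nat.sqrt_pos.2 hq
  have hlow := mul_one_add_harmonic_sub_le_recipSum hpos hmono hdec hp (Nat.sqrt_le_self q)
  have h3 := harmonic_add_one_le (Nat.sqrt_le' q)
  have hlp := hpos p hp
  have hH := harmonic_nonneg q
  calc 1 / recipSum lam q ≤ 1 / ((p / lam p) * (((harmonic q : ℝ) + 1) / 3)) :=
        one_div_le_one_div_of_le (by positivity) (hlow.trans' (by gcongr; linarith))
    _ = _ := by field_simp

theorem exists_perm_recipSum_mul_le (hpos : ∀ n : ℕ, 1 ≤ n → 0 < lam n) {n : ℕ}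
    {V : ℝ} (g : Fin n → ℝ) (hg : 0 ≤ g)
    (hV : ∀ σ : Equiv.Perm (Fin n), ∑ i, g (σ i) / lam (i.1 + 1) ≤ V) :
    ∃ ρ : Equiv.Perm (Fin n), ∀ i, recipSum lam (ρ i + 1) * g i ≤ V := by
  set σ := Tuple.sort (fun i => -g i)
  have hσ : Antitone (g ∘ σ) := fun s t hst =>
    neg_le_neg_iff.1 (Tuple.monotone_sort (fun i => -g i) hst)
  refine ⟨σ.symm, fun i => ?_⟩
  have hw : ∀ s : Fin n, 0 < lam (s.1 + 1) := fun s => hpos _ (by omega)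
  calc recipSum lam (σ.symm i + 1) * g i
      = ∑ s ∈ Iic (σ.symm i), g (σ (σ.symm i)) / lam (s.1 + 1) := by
        rw [recipSum_succ_eq_sum_Iic, sum_mul, σ.apply_symm_apply]
        simp only [one_div_mul_eq_div]
    _ ≤ ∑ s ∈ Iic (σ.symm i), g (σ s) / lam (s.1 + 1) :=
        sum_le_sum fun s hs => div_le_div_of_nonneg_right (hσ (mem_Iic.1 hs)) (hw s).le
    _ ≤ ∑ s, g (σ s) / lam (s.1 + 1) :=
        sum_le_sum_of_subset_of_nonneg (subset_univ _) fun s _ _ => div_nonneg (hg _) (hw s).le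
    _ ≤ V := hV σ

theorem sum_range_lam_sqrt_le (hpos : ∀ n : ℕ, 1 ≤ n → 0 < lam n)
    (hsum : Summable fun n : ℕ => lam (n + 1) / ((n:ℝ) + 1) ^ 2) (Q : ℕ) :
    ∑ k ∈ range Q, lam (Nat.sqrt (k + 1)) / (Nat.sqrt (k + 1) * ((k : ℝ) + 1))
      ≤ 3 * ∑' n : ℕ, lam (n + 1) / ((n:ℝ) + 1) ^ 2 := by
  have hsqrt : ∀ k, 1 ≤ Nat.sqrt (k + 1) := fun k => Nat.sqrt_pos.2 k.succ_pos
  have hfiber : ∀ p ∈ range Q,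
      ∑ k ∈ range Q with Nat.sqrt (k + 1) - 1 = p,
        lam (Nat.sqrt (k + 1)) / (Nat.sqrt (k + 1) * ((k : ℝ) + 1))
      ≤ 3 * (lam (p + 1) / ((p : ℝ) + 1) ^ 2) := fun p _ => by
    have hlp := hpos (p + 1) (by omega)
    set F := (range Q).filter fun k => Nat.sqrt (k + 1) - 1 = p
    have hF : ∀ k ∈ F, Nat.sqrt (k + 1) = p + 1 := fun k hk => by
      have := hsqrt k; simp only [F, mem_filter] at hk; omega
    have hcard : #F ≤ 2 * p + 3 := by
      refine (card_le_card (t := Ico (p * p + 2 * p) (p * p + 2 * p + (2 * p + 3)))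
        fun k hk => ?_).trans (by simp)
      have h1 := Nat.sqrt_le' (k + 1)
      have h2 := Nat.lt_succ_sqrt' (k + 1)
      rw [hF k hk] at h1 h2
      simp only [Finset.mem_Ico]
      constructor <;> nlinarith
    calc _ ≤ #F • (lam (p + 1) / ((p : ℝ) + 1) ^ 3) := sum_le_card_nsmul _ _ _ fun k hk => by
          have h1 := Nat.sqrt_le' (k + 1)
          rw [hF k hk] at h1 ⊢
          have h1' : ((p : ℝ) + 1) ^ 2 ≤ k + 1 := by exact_mod_cast h1
          push_cast
          refine div_le_div_of_nonneg_left hlp.le (by positivity) ?_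
          calc ((p : ℝ) + 1) ^ 3 = (p + 1) * (p + 1) ^ 2 := by ring
            _ ≤ _ := by gcongr
      _ ≤ (2 * p + 3 : ℕ) * (lam (p + 1) / ((p : ℝ) + 1) ^ 3) := by
          rw [nsmul_eq_mul]; gcongr
      _ ≤ _ := by
          rw [mul_div_assoc', mul_div_assoc', div_le_div_iff₀ (by positivity) (by positivity)]
          push_cast
          nlinarith [mul_nonneg (mul_nonneg hlp.le (sq_nonneg ((p : ℝ) + 1))) p.cast_nonneg]
  rw [← sum_fiberwise_of_maps_to (t := range Q) (g := fun k => Nat.sqrt (k + 1) - 1)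
    fun k hk => mem_range.2 (by have := Nat.sqrt_le_self (k + 1); simp at hk; omega)]
  calc _ ≤ ∑ p ∈ range Q, 3 * (lam (p + 1) / ((p : ℝ) + 1) ^ 2) := sum_le_sum hfiber
    _ ≤ _ := by
        rw [← mul_sum]
        gcongr
        exact hsum.sum_le_tsum _ fun n _ => (div_pos (hpos _ (by omega)) (by positivity)).le

end Weights

theorem sum_range_ite_harmonic_le (q n : ℕ) :
    ∑ k ∈ range n, (if k < q then (harmonic q : ℝ) / (k + 1) else q / ((k : ℝ) + 1) ^ 2)
      ≤ harmonic q ^ 2 + 2 * harmonic q := by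
  have hhead : ∑ k ∈ range q,
      (if k < q then (harmonic q : ℝ) / (k + 1) else q / ((k : ℝ) + 1) ^ 2) = harmonic q ^ 2 := by
    rw [sum_congr rfl fun k hk => if_pos (mem_range.1 hk)]
    simp_rw [div_eq_mul_one_div (harmonic q : ℝ)]
    rw [← mul_sum, ← harmonic_eq_sum_one_div, sq]
  have htail : ∑ k ∈ Ico q (q + n),
      (if k < q then (harmonic q : ℝ) / (k + 1) else q / ((k : ℝ) + 1) ^ 2) ≤ 2 * harmonic q := by
    calc _ = q * ∑ k ∈ Ioo q (q + n + 1), ((k : ℝ) ^ 2)⁻¹ := by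
          rw [← Finset.Ico_add_one_left_eq_Ioo, ← sum_Ico_add', mul_sum]
          refine sum_congr rfl fun k hk => ?_
          rw [if_neg (by simp at hk; omega)]
          push_cast; ring
      _ ≤ q * (2 / (q + 1)) := by gcongr; exact sum_Ioo_inv_sq_le _ _
      _ = 2 * (q / (q + 1)) := by ring
      _ ≤ 2 * harmonic q := by gcongr; exact div_succ_le_harmonic q
  calc _ ≤ ∑ k ∈ range (q + n),
        (if k < q then (harmonic q : ℝ) / (k + 1) else q / ((k : ℝ) + 1) ^ 2) :=
        sum_le_sum_of_subset_of_nonneg (range_subset_range.2 (by omega))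
          fun k _ _ => by have := harmonic_nonneg q; split_ifs <;> positivity
    _ ≤ _ := by rw [← sum_range_add_sum_Ico _ (Nat.le_add_right q n), hhead]; linarith

theorem sum_upper_triangle_rank_lt_le {n m : ℕ} (ρ : Fin n → Equiv.Perm (Fin m)) (q : ℕ) :
    ∑ i : Fin n, ∑ j : Fin m,
      (if (i : ℕ) ≤ j ∧ (ρ i j : ℕ) < q then 1 / (((i : ℝ) + 1) * ((j : ℝ) + 1)) else 0)
      ≤ harmonic q ^ 2 + 2 * harmonic q := by
  classical
  set B : Fin n → Finset (Fin m) := fun i => {j | (i : ℕ) ≤ j ∧ (ρ i j : ℕ) < q}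
  have hrow : ∀ i : Fin n, ∑ j : Fin m,
      (if (i : ℕ) ≤ j ∧ (ρ i j : ℕ) < q then 1 / (((i : ℝ) + 1) * ((j : ℝ) + 1)) else 0)
      = 1 / ((i : ℝ) + 1) * ∑ j ∈ B i, 1 / ((j : ℝ) + 1) := fun i => by
    simp_rw [B, sum_filter, mul_sum, mul_ite, mul_zero, one_div_mul_one_div]
  have hcard : ∀ i, #(B i) ≤ q := fun i => by
    simpa using card_le_card_of_injOn (fun j => (ρ i j : ℕ)) (t := range q)
      (fun j hj => by simp [B] at hj; simpa using hj.2)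
      (fun j _ k _ h => (ρ i).injective (Fin.val_injective h))
  have hS1 : ∀ i, ∑ j ∈ B i, 1 / ((j : ℝ) + 1) ≤ harmonic q := fun i => by
    have := sum_one_div_succ_le_harmonic ((B i).map Fin.valEmbedding)
    rw [sum_map, card_map] at this
    exact this.trans (by exact_mod_cast harmonic_mono (hcard i))
  have hS2 : ∀ i : Fin n, ∑ j ∈ B i, 1 / ((j : ℝ) + 1) ≤ q / ((i : ℝ) + 1) := fun i => by
    calc _ ≤ #(B i) • (1 / ((i : ℝ) + 1)) := sum_le_card_nsmul _ _ _ fun j hj => by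
          simp only [B, mem_filter] at hj
          exact one_div_le_one_div_of_le (by positivity) (by simpa using hj.2.1)
      _ ≤ q * (1 / ((i : ℝ) + 1)) := by
          rw [nsmul_eq_mul]; gcongr; exact_mod_cast hcard i
      _ = _ := mul_one_div _ _
  calc _ = ∑ i : Fin n, 1 / ((i : ℝ) + 1) * ∑ j ∈ B i, 1 / ((j : ℝ) + 1) :=
        sum_congr rfl fun i _ => hrow i
    _ ≤ ∑ i : Fin n,
        (if (i : ℕ) < q then (harmonic q : ℝ) / (i + 1) else q / ((i : ℝ) + 1) ^ 2) := by
        refine sum_le_sum fun i _ => ?_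
        split_ifs
        · rw [one_div_mul_eq_div]; gcongr; exact hS1 i
        · calc _ ≤ 1 / ((i : ℝ) + 1) * (q / ((i : ℝ) + 1)) := by gcongr; exact hS2 i
            _ = _ := by rw [one_div_mul_eq_div, div_div, ← sq]
    _ ≤ _ := (Fin.sum_univ_eq_sum_range
        (fun k => if k < q then (harmonic q : ℝ) / (k + 1) else q / ((k : ℝ) + 1) ^ 2) n).trans_le
          (sum_range_ite_harmonic_le q n)

def weightBound (q : ℕ) : ℝ := 2 * ((harmonic q : ℝ) ^ 2 + 2 * harmonic q)

theorem sum_rank_lt_le {n m : ℕ} (τ : Fin m → Equiv.Perm (Fin n))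
    (σ : Fin n → Equiv.Perm (Fin m)) (q : ℕ) :
    ∑ x ∈ (univ : Finset (Fin n × Fin m)) with max (τ x.2 x.1 : ℕ) (σ x.1 x.2) < q,
      1 / (((x.1 : ℝ) + 1) * ((x.2 : ℝ) + 1)) ≤ weightBound q := by
  have hlower := sum_upper_triangle_rank_lt_le τ q
  rw [sum_comm] at hlower
  calc _ = ∑ i : Fin n, ∑ j : Fin m, if max (τ j i : ℕ) (σ i j) < q then
        1 / (((i : ℝ) + 1) * ((j : ℝ) + 1)) else 0 := by
        rw [sum_filter, Fintype.sum_prod_type]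
    _ ≤ ∑ i : Fin n, ∑ j : Fin m,
        ((if (i : ℕ) ≤ j ∧ (σ i j : ℕ) < q then 1 / (((i : ℝ) + 1) * ((j : ℝ) + 1)) else 0)
          + (if (j : ℕ) ≤ i ∧ (τ j i : ℕ) < q then 1 / (((j : ℝ) + 1) * ((i : ℝ) + 1)) else 0)) :=
        sum_le_sum fun i _ => sum_le_sum fun j _ => by
          have hA : 0 ≤ if (i : ℕ) ≤ j ∧ (σ i j : ℕ) < q then
              1 / (((i : ℝ) + 1) * ((j : ℝ) + 1)) else 0 := by positivity
          have hB : 0 ≤ if (j : ℕ) ≤ i ∧ (τ j i : ℕ) < q then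
              1 / (((j : ℝ) + 1) * ((i : ℝ) + 1)) else 0 := by positivity
          by_cases h : max (τ j i : ℕ) (σ i j) < q
          · rw [if_pos h]
            rw [max_lt_iff] at h
            rcases le_total (i : ℕ) j with hij | hij
            · rw [if_pos ⟨hij, h.2⟩]; linarith
            · rw [if_pos (⟨hij, h.1⟩ : (j : ℕ) ≤ i ∧ (τ j i : ℕ) < q), mul_comm ((j : ℝ) + 1)]
              linarith
          · rw [if_neg h]; linarith
    _ = (∑ i : Fin n, ∑ j : Fin m,
          if (i : ℕ) ≤ j ∧ (σ i j : ℕ) < q then 1 / (((i : ℝ) + 1) * ((j : ℝ) + 1)) else 0)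
        + ∑ i : Fin n, ∑ j : Fin m,
          if (j : ℕ) ≤ i ∧ (τ j i : ℕ) < q then 1 / (((j : ℝ) + 1) * ((i : ℝ) + 1)) else 0 := by
        simp only [sum_add_distrib]
    _ ≤ weightBound q := by
        rw [weightBound]; linarith [sum_upper_triangle_rank_lt_le σ q]

theorem weightBound_succ_sub_le (k : ℕ) :
    weightBound (k + 1) - weightBound k ≤ 4 * ((harmonic (k + 1) : ℝ) + 1) / (k + 1) := by
  have hH : (harmonic (k + 1) : ℝ) = harmonic k + 1 / ((k : ℝ) + 1) := by
    rw [harmonic_succ]; push_cast; rw [one_div]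
  have h0 := harmonic_nonneg k
  have hd : 0 ≤ 1 / ((k : ℝ) + 1) := by positivity
  rw [weightBound, weightBound, div_eq_mul_one_div _ ((k : ℝ) + 1), hH]
  nlinarith [mul_nonneg hd hd]

theorem mul_sum_range_le_sum_range_mul {e G : ℕ → ℝ} (hG : Antitone G) {Q : ℕ}
    (he : ∀ q ≤ Q, 0 ≤ ∑ k ∈ range q, e k) :
    G Q * ∑ k ∈ range Q, e k ≤ ∑ k ∈ range Q, e k * G k := by
  induction Q with
  | zero => simp
  | succ Q ih =>
    have hQ := ih fun q hq => he q (by omega)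
    have hGQ : G (Q + 1) * ∑ k ∈ range (Q + 1), e k ≤ G Q * ∑ k ∈ range (Q + 1), e k :=
      mul_le_mul_of_nonneg_right (hG (by omega)) (he _ le_rfl)
    simp only [sum_range_succ] at hGQ ⊢
    linarith

theorem sum_mul_rank_le {ι : Type*} (s : Finset ι) (w : ι → ℝ) (r : ι → ℕ) {G φ : ℕ → ℝ}
    (hG : Antitone G) (hG0 : ∀ k, 0 ≤ G k) (hφ0 : φ 0 = 0)
    (hW : ∀ q, ∑ x ∈ s with r x < q, w x ≤ φ q) {Q : ℕ} (hQ : ∀ x ∈ s, r x < Q) :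
    ∑ x ∈ s, w x * G (r x) ≤ ∑ k ∈ range Q, (φ (k + 1) - φ k) * G k := by
  set μ : ℕ → ℝ := fun k => ∑ x ∈ s with r x = k, w x
  have hμ : ∀ q, ∑ k ∈ range q, μ k = ∑ x ∈ s with r x < q, w x := fun q => by
    rw [← sum_fiberwise_of_maps_to (s := s.filter (r · < q)) (t := range q) (g := r)
      (fun x hx => mem_range.2 (mem_filter.1 hx).2)]
    refine sum_congr rfl fun k hk => ?_
    rw [filter_filter]
    refine sum_congr (filter_congr fun x _ => ?_) fun _ _ => rfl
    have := mem_range.1 hk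
    constructor
    · rintro rfl; exact ⟨this, rfl⟩
    · exact And.right
  have hlhs : ∑ x ∈ s, w x * G (r x) = ∑ k ∈ range Q, μ k * G k := by
    rw [← sum_fiberwise_of_maps_to (t := range Q) (g := r) fun x hx => mem_range.2 (hQ x hx)]
    refine sum_congr rfl fun k _ => ?_
    rw [sum_mul]
    exact sum_congr rfl fun x hx => by rw [(mem_filter.1 hx).2]
  have he : ∀ q, 0 ≤ ∑ k ∈ range q, (φ (k + 1) - φ k - μ k) := fun q => by
    rw [sum_sub_distrib, sum_range_sub, hφ0, hμ]; linarith [hW q]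
  have key := mul_sum_range_le_sum_range_mul hG (Q := Q) fun q _ => he q
  have := mul_nonneg (hG0 Q) (he Q)
  rw [show ∑ k ∈ range Q, (φ (k + 1) - φ k - μ k) * G k
      = ∑ k ∈ range Q, (φ (k + 1) - φ k) * G k - ∑ k ∈ range Q, μ k * G k by
    rw [← sum_sub_distrib]; exact sum_congr rfl fun _ _ => by ring] at key
  rw [hlhs]
  linarith

theorem sum_range_weightBound_mul_le {lam : ℕ → ℝ} (hpos : ∀ n : ℕ, 1 ≤ n → 0 < lam n)
    (hmono : ∀ n : ℕ, 1 ≤ n → lam n ≤ lam (n + 1))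
    (hdec : ∀ n : ℕ, 1 ≤ n → lam (n + 1) / ((n:ℝ) + 1) ≤ lam n / (n:ℝ))
    (hsum : Summable fun n : ℕ => lam (n + 1) / ((n:ℝ) + 1) ^ 2) (Q : ℕ) :
    ∑ k ∈ range Q, (weightBound (k + 1) - weightBound k) * (1 / recipSum lam (k + 1))
      ≤ 36 * ∑' n : ℕ, lam (n + 1) / ((n:ℝ) + 1) ^ 2 := by
  calc _ ≤ ∑ k ∈ range Q,
        12 * (lam (Nat.sqrt (k + 1)) / (Nat.sqrt (k + 1) * ((k : ℝ) + 1))) :=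
        sum_le_sum fun k _ => by
          have hH := harmonic_nonneg (k + 1)
          have hp : (1 : ℝ) ≤ Nat.sqrt (k + 1) := by exact_mod_cast Nat.sqrt_pos.2 k.succ_pos
          calc _ ≤ 4 * ((harmonic (k + 1) : ℝ) + 1) / (k + 1) * (3 * lam (Nat.sqrt (k + 1))
                / (Nat.sqrt (k + 1) * ((harmonic (k + 1) : ℝ) + 1))) := by
                refine mul_le_mul (weightBound_succ_sub_le k)
                  (by exact_mod_cast one_div_recipSum_le hpos hmono hdec k.succ_pos)
                  (one_div_pos.2 (recipSum_pos hpos k.succ_pos)).le (by positivity)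
            _ = _ := by field_simp; ring
    _ = 12 * ∑ k ∈ range Q, lam (Nat.sqrt (k + 1)) / (Nat.sqrt (k + 1) * ((k : ℝ) + 1)) :=
        (mul_sum _ _ _).symm
    _ ≤ 12 * (3 * ∑' n : ℕ, lam (n + 1) / ((n:ℝ) + 1) ^ 2) := by
        gcongr; exact sum_range_lam_sqrt_le hpos hsum Q
    _ = _ := by ring

theorem sum_div_succ_mul_succ_le {lam : ℕ → ℝ} (hpos : ∀ n : ℕ, 1 ≤ n → 0 < lam n)
    (hmono : ∀ n : ℕ, 1 ≤ n → lam n ≤ lam (n + 1))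
    (hdec : ∀ n : ℕ, 1 ≤ n → lam (n + 1) / ((n:ℝ) + 1) ≤ lam n / (n:ℝ))
    (hsum : Summable fun n : ℕ => lam (n + 1) / ((n:ℝ) + 1) ^ 2) {n m : ℕ}
    (M : Fin n → Fin m → ℝ) (hM : ∀ i j, 0 ≤ M i j) {V : ℝ} (hV : 0 ≤ V)
    (hcol : ∀ j (σ : Equiv.Perm (Fin n)), ∑ i, M (σ i) j / lam (i.1 + 1) ≤ V)
    (hrow : ∀ i (σ : Equiv.Perm (Fin m)), ∑ j, M i (σ j) / lam (j.1 + 1) ≤ V) :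
    ∑ i, ∑ j, M i j / (((i : ℝ) + 1) * ((j : ℝ) + 1))
      ≤ V * (36 * ∑' n : ℕ, lam (n + 1) / ((n:ℝ) + 1) ^ 2) := by
  choose τ hτ using fun j => exists_perm_recipSum_mul_le hpos (M · j) (fun i => hM i j) (hcol j)
  choose σ hσ using fun i => exists_perm_recipSum_mul_le hpos (M i) (hM i) (hrow i)
  set r : Fin n × Fin m → ℕ := fun x => max (τ x.2 x.1 : ℕ) (σ x.1 x.2)
  set G : ℕ → ℝ := fun k => 1 / recipSum lam (k + 1)
  have hG : Antitone G := fun a b hab =>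
    one_div_le_one_div_of_le (recipSum_pos hpos a.succ_pos) (recipSum_mono hpos (by omega))
  have hG0 : ∀ k, 0 ≤ G k := fun k => (one_div_pos.2 (recipSum_pos hpos k.succ_pos)).le
  have hMG : ∀ x : Fin n × Fin m, M x.1 x.2 ≤ V * G (r x) := fun x => by
    have h : recipSum lam (r x + 1) * M x.1 x.2 ≤ V := by
      rcases max_choice (τ x.2 x.1 : ℕ) (σ x.1 x.2) with h | h
      · rw [show r x = _ from h]; exact hτ x.2 x.1
      · rw [show r x = _ from h]; exact hσ x.1 x.2
    rw [mul_one_div, le_div_iff₀ (recipSum_pos hpos (r x).succ_pos), mul_comm]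
    exact h
  have hr : ∀ x ∈ (univ : Finset (Fin n × Fin m)), r x < n + m := fun x _ =>
    max_lt (by omega) (by omega)
  calc _ = ∑ x : Fin n × Fin m, M x.1 x.2 / (((x.1 : ℝ) + 1) * ((x.2 : ℝ) + 1)) :=
        (Fintype.sum_prod_type _).symm
    _ ≤ ∑ x : Fin n × Fin m, V * (1 / (((x.1 : ℝ) + 1) * ((x.2 : ℝ) + 1)) * G (r x)) :=
        sum_le_sum fun x _ => by
          rw [div_eq_mul_one_div, mul_comm (1 / _), ← mul_assoc, mul_comm V]
          exact mul_le_mul_of_nonneg_right ((hMG x).trans_eq (mul_comm _ _)) (by positivity)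
    _ = V * ∑ x : Fin n × Fin m, 1 / (((x.1 : ℝ) + 1) * ((x.2 : ℝ) + 1)) * G (r x) :=
        (mul_sum _ _ _).symm
    _ ≤ V * ∑ k ∈ range (n + m), (weightBound (k + 1) - weightBound k) * G k := by
        gcongr
        exact sum_mul_rank_le _ _ r hG hG0 (by simp [weightBound]) (sum_rank_lt_le τ σ) hr
    _ ≤ _ := by gcongr; exact sum_range_weightBound_mul_le hpos hmono hdec hsum _

theorem zero_mem_V1set {lam : ℕ → ℝ} {f : ℝ → ℝ → ℝ} : (0 : ℝ) ∈ V1set lam f :=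
  ⟨0, by norm_num, 0, Fin.elim0, Fin.elim0, ⟨fun i => i.elim0, fun i => i.elim0⟩, by simp⟩

theorem V2set_eq_V1set_swap (lam : ℕ → ℝ) (f : ℝ → ℝ → ℝ) :
    V2set lam f = V1set lam (fun x y => f y x) := rfl

theorem Nonoverlapping.comp_perm {n : ℕ} {a b : Fin n → ℝ} (h : Nonoverlapping n a b)
    (σ : Equiv.Perm (Fin n)) : Nonoverlapping n (a ∘ σ) (b ∘ σ) :=
  ⟨fun i => h.1 (σ i), fun _ _ hij => h.2 _ _ (σ.injective.ne hij)⟩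

theorem Nonoverlapping.left_mem {n : ℕ} {a b : Fin n → ℝ} (h : Nonoverlapping n a b) (i : Fin n) :
    a i ∈ Icc (-1 : ℝ) 1 :=
  ⟨(h.1 i).1, (h.1 i).2.1.le.trans (h.1 i).2.2⟩

theorem Nonoverlapping.right_mem {n : ℕ} {a b : Fin n → ℝ} (h : Nonoverlapping n a b) (i : Fin n) :
    b i ∈ Icc (-1 : ℝ) 1 :=
  ⟨(h.1 i).1.trans (h.1 i).2.1.le, (h.1 i).2.2⟩

theorem bddAbove_V1set_of_le {lam μ : ℕ → ℝ} {c : ℝ} (hc : 0 ≤ c)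
    (h : ∀ k, 1 ≤ k → 1 / μ k ≤ c * (1 / lam k)) {f : ℝ → ℝ → ℝ}
    (hf : BddAbove (V1set lam f)) : BddAbove (V1set μ f) := by
  obtain ⟨B, hB⟩ := hf
  refine ⟨c * B, ?_⟩
  rintro _ ⟨y, hy, n, a, b, hab, rfl⟩
  calc ∑ i : Fin n, |f (b i) y - f (a i) y| / μ (i.1 + 1)
      ≤ ∑ i : Fin n, c * (|f (b i) y - f (a i) y| / lam (i.1 + 1)) := sum_le_sum fun i _ => by
        have := h (i.1 + 1) (by omega)
        exact (div_eq_mul_one_div _ _).trans_le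
          ((mul_le_mul_of_nonneg_left this (abs_nonneg _)).trans_eq (by ring))
    _ = c * ∑ i : Fin n, |f (b i) y - f (a i) y| / lam (i.1 + 1) := (mul_sum _ _ _).symm
    _ ≤ c * B := mul_le_mul_of_nonneg_left (hB ⟨y, hy, n, a, b, hab, rfl⟩) hc

theorem sum_abs_mixed_div_le {lam : ℕ → ℝ} (hpos : ∀ n : ℕ, 1 ≤ n → 0 < lam n)
    {f : ℝ → ℝ → ℝ} {V : ℝ} (hV : V ∈ upperBounds (V1set lam f)) {n : ℕ} {a b : Fin n → ℝ}
    (hab : Nonoverlapping n a b) {c d : ℝ} (hc : c ∈ Icc (-1 : ℝ) 1) (hd : d ∈ Icc (-1 : ℝ) 1) :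
    ∑ i : Fin n, |f (a i) c - f (a i) d - f (b i) c + f (b i) d| / lam (i.1 + 1) ≤ 2 * V := by
  calc _ ≤ ∑ i : Fin n, (|f (b i) c - f (a i) c| / lam (i.1 + 1)
        + |f (b i) d - f (a i) d| / lam (i.1 + 1)) := sum_le_sum fun i _ => by
        rw [← add_div]
        refine div_le_div_of_nonneg_right ?_ (hpos _ (by omega)).le
        calc _ = |(f (b i) d - f (a i) d) - (f (b i) c - f (a i) c)| := by ring_nf
          _ ≤ _ := (abs_sub _ _).trans_eq (add_comm _ _)
    _ ≤ V + V := by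
        rw [sum_add_distrib]
        exact add_le_add (hV ⟨c, hc, n, a, b, hab, rfl⟩) (hV ⟨d, hd, n, a, b, hab, rfl⟩)
    _ = 2 * V := by ring

/-- if `Λ = {λ_n}` is nondecreasing and positive, `λ_n/n` is nonincreasing and
`∑ λ_n/n² < ∞`, then `PΛBV ⊆ HBV`. -/
theorem PLambdaBV_subset_HBV (lam : ℕ → ℝ)
    (hpos : ∀ n : ℕ, 1 ≤ n → 0 < lam n)
    (hmono : ∀ n : ℕ, 1 ≤ n → lam n ≤ lam (n + 1))
    (hdec : ∀ n : ℕ, 1 ≤ n → lam (n + 1) / ((n:ℝ) + 1) ≤ lam n / (n:ℝ))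
    (hsum : Summable fun n : ℕ => lam (n + 1) / ((n:ℝ) + 1) ^ 2)
    (f : ℝ → ℝ → ℝ) (hf : PLambdaBV lam f) : HBV f := by
  obtain ⟨⟨V₁, hV₁⟩, ⟨V₂, hV₂⟩⟩ := hf
  rw [V2set_eq_V1set_swap] at hV₂
  have hharm : ∀ k, 1 ≤ k → 1 / harm k ≤ lam 1 * (1 / lam k) :=
    fun k hk => one_div_le_lam_one_mul_one_div hpos hdec hk
  have hlam₁ := (hpos 1 le_rfl).le
  refine ⟨bddAbove_V1set_of_le hlam₁ hharm ⟨V₁, hV₁⟩, bddAbove_V1set_of_le hlam₁ hharm ⟨V₂, hV₂⟩,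
    ⟨2 * (V₁ + V₂) * (36 * ∑' n : ℕ, lam (n + 1) / ((n:ℝ) + 1) ^ 2), ?_⟩⟩
  rintro _ ⟨n, a, b, m, c, d, hab, hcd, rfl⟩
  have h₁ := hV₁ zero_mem_V1set
  have h₂ := hV₂ zero_mem_V1set
  simp only [harm, Nat.cast_add, Nat.cast_one]
  refine sum_div_succ_mul_succ_le hpos hmono hdec hsum _ (fun _ _ => abs_nonneg _)
    (by positivity) (fun j σ => ?_) (fun i τ => ?_)
  · have := sum_abs_mixed_div_le hpos hV₁ (hab.comp_perm σ) (hcd.left_mem j) (hcd.right_mem j)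
    simp only [Function.comp_apply] at this
    linarith
  · have := sum_abs_mixed_div_le hpos hV₂ (hcd.comp_perm τ) (hab.left_mem i) (hab.right_mem i)
    simp only [Function.comp_apply] at this
    simp only [sub_right_comm _ (f (b i) _)] at this ⊢
    linarith
end
end

section
/- Let f : [-1,1]² → ℝ be bounded and suppose ∑_{n=1}^∞ √(v_j(n,f)) / n^{3/2} < ∞ for j = 1, 2, where v_j are the partial moduli of variation. Then f has bounded harmonic variation (f ∈ HBV). -/
open MeasureTheory Set Filter Real

noncomputable section

/-!
Split the indices into dyadic blocks `2 ^ p ≤ i + 1 < 2 ^ (p + 1)`. On a product of blocks the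
mixed differences sum to at most `2 ^ p · 2 v₂(2 ^ q)` row by row and to at most
`2 ^ q · 2 v₁(2 ^ p)` column by column; dividing by the harmonic weights `≥ 2 ^ (p + q)` and
taking the geometric mean of the two bounds gives
`√(2 v₁(2 ^ p) / 2 ^ p) · √(2 v₂(2 ^ q) / 2 ^ q)`.
So the mixed harmonic variation is bounded by a product of two series `∑ₚ √(v_j(2 ^ p) / 2 ^ p)`,
which converge by Cauchy condensation of `∑ √(v_j(n)) / n ^ (3/2)` because `v_j` is nondecreasing.
The one-variable harmonic variations are the case of a single column.
-/

namespace Nonoverlapping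

variable {n : ℕ} {a b : Fin n → ℝ}

lemma left_mem_Icc (h : Nonoverlapping n a b) (i : Fin n) : a i ∈ Icc (-1 : ℝ) 1 :=
  ⟨(h.1 i).1, by linarith [h.1 i]⟩

lemma right_mem_Icc (h : Nonoverlapping n a b) (i : Fin n) : b i ∈ Icc (-1 : ℝ) 1 :=
  ⟨by linarith [h.1 i], (h.1 i).2.2⟩

lemma disjoint (h : Nonoverlapping n a b) {i j : Fin n} (hij : i ≠ j) :
    Disjoint (Ioo (a i) (b i)) (Ioo (a j) (b j)) :=
  Set.disjoint_iff_inter_eq_empty.2 (h.2 i j hij)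

lemma comp_injective {k : ℕ} (h : Nonoverlapping n a b) {e : Fin k → Fin n}
    (he : Function.Injective e) : Nonoverlapping k (a ∘ e) (b ∘ e) :=
  ⟨fun i => h.1 (e i), fun _ _ hij => h.2 _ _ (he.ne hij)⟩

lemma cons_midpoint {a b : Fin (n + 1) → ℝ} (h : Nonoverlapping (n + 1) a b) :
    Nonoverlapping (n + 2) (Fin.cons (a 0) (Function.update a 0 ((a 0 + b 0) / 2)))
      (Fin.cons ((a 0 + b 0) / 2) b) := by
  obtain ⟨hl, hab, hr⟩ := h.1 0
  have hμ : a 0 < (a 0 + b 0) / 2 ∧ (a 0 + b 0) / 2 < b 0 := ⟨by linarith, by linarith⟩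
  set μ := (a 0 + b 0) / 2
  have hsub : ∀ i, Ioo (Function.update a 0 μ i) (b i) ⊆ Ioo (a i) (b i) := by
    intro i
    rcases eq_or_ne i 0 with rfl | hi
    · exact Ioo_subset_Ioo_left (by simpa using hμ.1.le)
    · simp [hi]
  have hhead : ∀ j, Disjoint (Ioo (a 0) μ) (Ioo (Function.update a 0 μ j) (b j)) := by
    intro j
    rcases eq_or_ne j 0 with rfl | hj
    · simp
    · exact (h.disjoint hj.symm).mono (Ioo_subset_Ioo_right hμ.2.le) (hsub j)
  refine ⟨fun i => ?_, fun i j hij => Set.disjoint_iff_inter_eq_empty.1 ?_⟩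
  · refine Fin.cases ⟨hl, hμ.1, hμ.2.le.trans hr⟩ (fun i => ?_) i
    rcases eq_or_ne i 0 with rfl | hi
    · simpa using ⟨by linarith, hμ.2, hr⟩
    · simpa [hi] using h.1 i
  · cases i using Fin.cases <;> cases j using Fin.cases
    · exact absurd rfl hij
    · simpa using hhead _
    · simpa using (hhead _).symm
    · simpa using (h.disjoint (ne_of_apply_ne Fin.succ hij)).mono (hsub _) (hsub _)

end Nonoverlapping

section ModulusOfVariation

variable {f : ℝ → ℝ → ℝ} {B : ℝ}

lemma abs_sub_le_two_mul (hB : ∀ x ∈ Icc (-1 : ℝ) 1, ∀ y ∈ Icc (-1 : ℝ) 1, |f x y| ≤ B)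
    {x x' y : ℝ} (hx : x ∈ Icc (-1 : ℝ) 1) (hx' : x' ∈ Icc (-1 : ℝ) 1)
    (hy : y ∈ Icc (-1 : ℝ) 1) : |f x' y - f x y| ≤ 2 * B := by
  linarith [abs_sub (f x' y) (f x y), hB x hx y hy, hB x' hx' y hy]

lemma v1_nonneg (f : ℝ → ℝ → ℝ) (n : ℕ) : 0 ≤ v1 f n :=
  Real.sSup_nonneg (by rintro _ ⟨_, _, _, _, _, rfl⟩; positivity)

variable (hB : ∀ x ∈ Icc (-1 : ℝ) 1, ∀ y ∈ Icc (-1 : ℝ) 1, |f x y| ≤ B)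
include hB

lemma sum_le_v1 {y : ℝ} (hy : y ∈ Icc (-1 : ℝ) 1) {n : ℕ} {a b : Fin n → ℝ}
    (hab : Nonoverlapping n a b) : ∑ i, |f (b i) y - f (a i) y| ≤ v1 f n := by
  refine le_csSup ⟨2 * B * n, ?_⟩ ⟨y, hy, a, b, hab, rfl⟩
  rintro _ ⟨y, hy, a, b, hab, rfl⟩
  calc _ ≤ ∑ _i : Fin n, 2 * B := Finset.sum_le_sum fun i _ =>
        abs_sub_le_two_mul hB (hab.left_mem_Icc i) (hab.right_mem_Icc i) hy
    _ = 2 * B * n := by simp [mul_comm]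

lemma sum_finset_le_v1 {y : ℝ} (hy : y ∈ Icc (-1 : ℝ) 1) {n : ℕ} {a b : Fin n → ℝ}
    (hab : Nonoverlapping n a b) (t : Finset (Fin n)) :
    ∑ i ∈ t, |f (b i) y - f (a i) y| ≤ v1 f t.card := by
  rw [← t.map_orderEmbOfFin_univ rfl, Finset.sum_map, Finset.card_map, Finset.card_univ,
    Fintype.card_fin]
  exact sum_le_v1 hB hy (hab.comp_injective (t.orderEmbOfFin rfl).injective)

lemma v1_mono : Monotone (v1 f) := by
  refine monotone_nat_of_le_succ fun k => Real.sSup_le ?_ (v1_nonneg f _)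
  rintro _ ⟨y, hy, a, b, hab, rfl⟩
  cases k with
  | zero => simpa using v1_nonneg f 1
  | succ k =>
    refine le_trans ?_ (sum_le_v1 hB hy hab.cons_midpoint)
    simp only [Fin.sum_univ_succ, Fin.cons_zero, Fin.cons_succ, Function.update_self,
      Function.update_of_ne (Fin.succ_ne_zero _)]
    linarith [abs_sub_le (f (b 0) y) (f ((a 0 + b 0) / 2) y) (f (a 0) y)]

lemma sum_abs_mixed_le_two_mul_v1 {y y' : ℝ} (hy : y ∈ Icc (-1 : ℝ) 1)
    (hy' : y' ∈ Icc (-1 : ℝ) 1) {n : ℕ} {a b : Fin n → ℝ} (hab : Nonoverlapping n a b)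
    (t : Finset (Fin n)) :
    ∑ i ∈ t, |f (a i) y - f (a i) y' - f (b i) y + f (b i) y'| ≤ 2 * v1 f t.card := by
  calc _ ≤ ∑ i ∈ t, (|f (b i) y' - f (a i) y'| + |f (b i) y - f (a i) y|) :=
        Finset.sum_le_sum fun i _ => by
          rw [show f (a i) y - f (a i) y' - f (b i) y + f (b i) y'
            = (f (b i) y' - f (a i) y') - (f (b i) y - f (a i) y) by ring]
          exact abs_sub _ _
    _ ≤ v1 f t.card + v1 f t.card := by
        rw [Finset.sum_add_distrib]
        exact add_le_add (sum_finset_le_v1 hB hy' hab t) (sum_finset_le_v1 hB hy hab t)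
    _ = 2 * v1 f t.card := (two_mul _).symm

end ModulusOfVariation

lemma div_mul_le_sqrt_mul_sqrt {S a b x y : ℝ} (ha : 0 < a) (hb : 0 < b) (hx : S ≤ b * x)
    (hy : S ≤ a * y) : S / (a * b) ≤ √(x / a) * √(y / b) := by
  rcases lt_or_ge S 0 with hS | hS
  · exact (div_neg_of_neg_of_pos hS (by positivity)).le.trans (by positivity)
  have hx0 : 0 ≤ x := (mul_nonneg_iff_of_pos_left hb).1 (hS.trans hx)
  have hy0 : 0 ≤ y := (mul_nonneg_iff_of_pos_left ha).1 (hS.trans hy)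
  have hxy : x / a * (y / b) = (b * x) * (a * y) / (a * b) ^ 2 := by field_simp
  rw [← Real.sqrt_mul (div_nonneg hx0 ha.le), Real.le_sqrt (by positivity) (by positivity), hxy,
    div_pow]
  gcongr
  rw [sq]
  exact mul_le_mul hx hy hS (hS.trans hx)

/-- The `p`-th dyadic block `{i | 2 ^ p ≤ i + 1 < 2 ^ (p + 1)}` of `Fin n`. -/
def dyadicBlock (n p : ℕ) : Finset (Fin n) :=
  Finset.univ.filter fun i => Nat.log2 (i + 1) = p

lemma two_pow_le_of_mem_dyadicBlock {n p : ℕ} {i : Fin n} (hi : i ∈ dyadicBlock n p) :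
    2 ^ p ≤ (i : ℕ) + 1 := by
  rw [dyadicBlock, Finset.mem_filter] at hi
  exact hi.2 ▸ Nat.log2_self_le (Nat.succ_ne_zero _)

lemma card_dyadicBlock_le (n p : ℕ) : (dyadicBlock n p).card ≤ 2 ^ p := by
  have hmaps : Set.MapsTo (fun i : Fin n => (i : ℕ) + 1) (dyadicBlock n p)
      (Finset.Ico (2 ^ p) (2 ^ (p + 1))) := by
    intro i hi
    have hlt : (i : ℕ) + 1 < 2 ^ (p + 1) := by
      rw [Finset.mem_coe, dyadicBlock, Finset.mem_filter] at hi
      exact hi.2 ▸ Nat.lt_log2_self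
    simpa using ⟨two_pow_le_of_mem_dyadicBlock hi, hlt⟩
  have hinj : Set.InjOn (fun i : Fin n => (i : ℕ) + 1) (dyadicBlock n p) :=
    fun i _ j _ hij => Fin.ext (Nat.succ_injective hij)
  calc _ ≤ (Finset.Ico (2 ^ p) (2 ^ (p + 1))).card := Finset.card_le_card_of_injOn _ hmaps hinj
    _ = 2 ^ p := by rw [Nat.card_Ico, pow_succ]; omega

lemma sum_eq_sum_dyadicBlock {M : Type*} [AddCommMonoid M] {n : ℕ} (F : Fin n → M) :
    ∑ i, F i = ∑ p ∈ Finset.range n, ∑ i ∈ dyadicBlock n p, F i := by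
  refine (Finset.sum_fiberwise_of_maps_to (fun i _ => ?_) F).symm
  rw [Finset.mem_range, Nat.log2_lt (Nat.succ_ne_zero _)]
  exact (Nat.succ_le_of_lt i.isLt).trans_lt Nat.lt_two_pow_self

section MixedSums

variable {n m : ℕ} (D : Fin n → Fin m → ℝ) {w₁ w₂ : ℕ → ℝ}

lemma sum_dyadicBlock_div_le (hD : ∀ i j, 0 ≤ D i j) (hw₁ : Monotone w₁) (hw₂ : Monotone w₂)
    (hw₁0 : 0 ≤ w₁) (hw₂0 : 0 ≤ w₂)
    (hcol : ∀ j (t : Finset (Fin n)), ∑ i ∈ t, D i j ≤ w₁ t.card)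
    (hrow : ∀ i (t : Finset (Fin m)), ∑ j ∈ t, D i j ≤ w₂ t.card) (p q : ℕ) :
    ∑ i ∈ dyadicBlock n p, ∑ j ∈ dyadicBlock m q, D i j / (((i + 1 : ℕ) : ℝ) * ((j + 1 : ℕ) : ℝ))
      ≤ √(w₁ (2 ^ p) / 2 ^ p) * √(w₂ (2 ^ q) / 2 ^ q) := by
  have hrowS : ∑ i ∈ dyadicBlock n p, ∑ j ∈ dyadicBlock m q, D i j ≤ 2 ^ p * w₂ (2 ^ q) := by
    refine (Finset.sum_le_card_nsmul _ _ _ fun i _ =>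
      (hrow i _).trans (hw₂ (card_dyadicBlock_le m q))).trans ?_
    rw [nsmul_eq_mul]
    gcongr
    · exact hw₂0 _
    · exact_mod_cast card_dyadicBlock_le n p
  have hcolS : ∑ i ∈ dyadicBlock n p, ∑ j ∈ dyadicBlock m q, D i j ≤ 2 ^ q * w₁ (2 ^ p) := by
    rw [Finset.sum_comm]
    refine (Finset.sum_le_card_nsmul _ _ _ fun j _ =>
      (hcol j _).trans (hw₁ (card_dyadicBlock_le n p))).trans ?_
    rw [nsmul_eq_mul]
    gcongr
    · exact hw₁0 _
    · exact_mod_cast card_dyadicBlock_le m q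
  calc _ ≤ ∑ i ∈ dyadicBlock n p, ∑ j ∈ dyadicBlock m q, D i j / (2 ^ p * 2 ^ q) := by
        gcongr with i hi j hj
        · exact hD i j
        · exact_mod_cast two_pow_le_of_mem_dyadicBlock hi
        · exact_mod_cast two_pow_le_of_mem_dyadicBlock hj
    _ = (∑ i ∈ dyadicBlock n p, ∑ j ∈ dyadicBlock m q, D i j) / (2 ^ p * 2 ^ q) := by
        simp only [Finset.sum_div]
    _ ≤ _ := div_mul_le_sqrt_mul_sqrt (by positivity) (by positivity) hcolS hrowS

theorem sum_div_mul_le_of_sum_le (hD : ∀ i j, 0 ≤ D i j) (hw₁ : Monotone w₁)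
    (hw₂ : Monotone w₂) (hw₁0 : 0 ≤ w₁) (hw₂0 : 0 ≤ w₂)
    (hcol : ∀ j (t : Finset (Fin n)), ∑ i ∈ t, D i j ≤ w₁ t.card)
    (hrow : ∀ i (t : Finset (Fin m)), ∑ j ∈ t, D i j ≤ w₂ t.card) :
    ∑ i, ∑ j, D i j / (((i + 1 : ℕ) : ℝ) * ((j + 1 : ℕ) : ℝ))
      ≤ (∑ p ∈ Finset.range n, √(w₁ (2 ^ p) / 2 ^ p))
        * ∑ q ∈ Finset.range m, √(w₂ (2 ^ q) / 2 ^ q) := by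
  rw [Finset.sum_mul_sum, sum_eq_sum_dyadicBlock]
  simp_rw [sum_eq_sum_dyadicBlock (n := m)]
  gcongr with p _
  rw [Finset.sum_comm]
  gcongr with q _
  exact sum_dyadicBlock_div_le D hD hw₁ hw₂ hw₁0 hw₂0 hcol hrow p q

end MixedSums

/-- A single sum is a mixed sum with one column; its row bound `w 1` comes from singletons. -/
theorem sum_div_le_of_sum_le {n : ℕ} (d : Fin n → ℝ) (hd : ∀ i, 0 ≤ d i) {w : ℕ → ℝ}
    (hw : Monotone w) (hw0 : 0 ≤ w) (hsub : ∀ t : Finset (Fin n), ∑ i ∈ t, d i ≤ w t.card) :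
    ∑ i, d i / ((i + 1 : ℕ) : ℝ) ≤ (∑ p ∈ Finset.range n, √(w (2 ^ p) / 2 ^ p)) * √(w 1) := by
  have hrow : ∀ i (t : Finset (Fin 1)), ∑ _j ∈ t, d i ≤ w t.card := by
    intro i t
    rcases t.eq_empty_or_nonempty with rfl | ht
    · simpa using hw0 0
    · simpa [ht.eq_univ] using hsub {i}
  simpa using sum_div_mul_le_of_sum_le (m := 1) (fun i _ => d i) (fun i _ => hd i) hw hw hw0 hw0
    (fun _ t => hsub t) hrow

lemma rpow_three_halves {x : ℝ} (hx : 0 ≤ x) : x ^ (3 / 2 : ℝ) = x * √x := by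
  rw [show (3 / 2 : ℝ) = 1 + 1 / 2 by norm_num, Real.rpow_add' hx (by norm_num), Real.rpow_one,
    Real.sqrt_eq_rpow]

section Condensation

variable {w : ℕ → ℝ}

lemma sqrt_div_two_pow_le_sum_Ico (hw : Monotone w) (p : ℕ) :
    √(w (2 ^ p) / 2 ^ p)
      ≤ 2 * √2 * ∑ k ∈ Finset.Ico (2 ^ p) (2 ^ (p + 1)), √(w k) / (k : ℝ) ^ (3 / 2 : ℝ) := by
  have hs : (0 : ℝ) < 2 ^ p := by positivity
  have hterm : ∀ k ∈ Finset.Ico (2 ^ p) (2 ^ (p + 1)),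
      √(w (2 ^ p)) / (2 * 2 ^ p : ℝ) ^ (3 / 2 : ℝ) ≤ √(w k) / (k : ℝ) ^ (3 / 2 : ℝ) := by
    intro k hk
    rw [Finset.mem_Ico] at hk
    have hk₁ : (2 : ℝ) ^ p ≤ k := by exact_mod_cast hk.1
    have hk₂ : (k : ℝ) ≤ 2 * 2 ^ p := by exact_mod_cast pow_succ' 2 p ▸ hk.2.le
    have hk₀ : (0 : ℝ) < k := hs.trans_le hk₁
    gcongr
    exact hw hk.1
  have hcard : (Finset.Ico (2 ^ p) (2 ^ (p + 1))).card = 2 ^ p := by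
    rw [Nat.card_Ico, pow_succ]; omega
  have hsum := Finset.card_nsmul_le_sum _ _ _ hterm
  rw [hcard, nsmul_eq_mul, Nat.cast_pow, Nat.cast_ofNat] at hsum
  calc √(w (2 ^ p) / 2 ^ p)
      = 2 * √2 * (2 ^ p * (√(w (2 ^ p)) / (2 * 2 ^ p : ℝ) ^ (3 / 2 : ℝ))) := by
        rw [Real.sqrt_div' _ hs.le, rpow_three_halves (by positivity),
          Real.sqrt_mul zero_le_two]
        field_simp
    _ ≤ _ := by gcongr

lemma sum_range_sum_Ico_two_pow (g : ℕ → ℝ) (P : ℕ) :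
    ∑ p ∈ Finset.range P, ∑ k ∈ Finset.Ico (2 ^ p) (2 ^ (p + 1)), g k
      = ∑ k ∈ Finset.Ico 1 (2 ^ P), g k := by
  induction P with
  | zero => simp
  | succ P ih =>
    rw [Finset.sum_range_succ, ih, Finset.sum_Ico_consecutive _ Nat.one_le_two_pow
      (Nat.pow_le_pow_right two_pos P.le_succ)]

/-- Cauchy condensation without an antitone summand: each dyadic block is compared with the
first value of the monotone `w` on it. -/
theorem summable_sqrt_div_two_pow (hw : Monotone w)
    (hs : Summable fun k : ℕ => √(w (k + 1)) / ((k : ℝ) + 1) ^ (3 / 2 : ℝ)) :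
    Summable fun p : ℕ => √(w (2 ^ p) / 2 ^ p) := by
  refine summable_of_sum_range_le
    (c := 2 * √2 * ∑' k : ℕ, √(w (k + 1)) / ((k : ℝ) + 1) ^ (3 / 2 : ℝ))
    (fun _ => Real.sqrt_nonneg _) fun P => ?_
  calc ∑ p ∈ Finset.range P, √(w (2 ^ p) / 2 ^ p)
      ≤ 2 * √2 * ∑ k ∈ Finset.Ico 1 (2 ^ P), √(w k) / (k : ℝ) ^ (3 / 2 : ℝ) := by
        rw [← sum_range_sum_Ico_two_pow, Finset.mul_sum]
        exact Finset.sum_le_sum fun p _ => sqrt_div_two_pow_le_sum_Ico hw p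
    _ ≤ _ := by
        rw [Finset.sum_Ico_eq_sum_range]
        gcongr
        refine le_of_eq_of_le (Finset.sum_congr rfl fun k _ => ?_)
          (hs.sum_le_tsum _ fun k _ => by positivity)
        rw [add_comm 1 k, Nat.cast_succ]

end Condensation

section HarmonicVariation

variable {f : ℝ → ℝ → ℝ} {B : ℝ}
  (hB : ∀ x ∈ Icc (-1 : ℝ) 1, ∀ y ∈ Icc (-1 : ℝ) 1, |f x y| ≤ B)
include hB

lemma summable_sqrt_two_mul_v1_div_two_pow
    (h1 : Summable fun n : ℕ => √(v1 f (n + 1)) / ((n : ℝ) + 1) ^ ((3 : ℝ) / 2)) :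
    Summable fun p : ℕ => √(2 * v1 f (2 ^ p) / 2 ^ p) := by
  refine summable_sqrt_div_two_pow (w := fun k => 2 * v1 f k)
    ((v1_mono hB).const_mul zero_le_two) ((h1.mul_left √2).congr fun k => ?_)
  rw [Real.sqrt_mul zero_le_two, mul_div_assoc]

lemma bddAbove_V1set_harm (hs : Summable fun p : ℕ => √(2 * v1 f (2 ^ p) / 2 ^ p)) :
    BddAbove (V1set harm f) := by
  refine ⟨(∑' p, √(2 * v1 f (2 ^ p) / 2 ^ p)) * √(2 * v1 f 1), ?_⟩
  rintro _ ⟨y, hy, n, a, b, hab, rfl⟩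
  calc _ ≤ (∑ p ∈ Finset.range n, √(2 * v1 f (2 ^ p) / 2 ^ p)) * √(2 * v1 f 1) :=
        sum_div_le_of_sum_le _ (fun _ => abs_nonneg _) ((v1_mono hB).const_mul zero_le_two)
          (fun k => mul_nonneg zero_le_two (v1_nonneg f k))
          (fun t => (sum_finset_le_v1 hB hy hab t).trans (by linarith [v1_nonneg f t.card]))
    _ ≤ _ := by
        gcongr
        exact hs.sum_le_tsum _ fun _ _ => Real.sqrt_nonneg _

lemma bddAbove_V12set_harm (hs₁ : Summable fun p : ℕ => √(2 * v1 f (2 ^ p) / 2 ^ p))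
    (hs₂ : Summable fun p : ℕ => √(2 * v1 (Function.swap f) (2 ^ p) / 2 ^ p)) :
    BddAbove (V12set harm harm f) := by
  have hB' : ∀ x ∈ Icc (-1 : ℝ) 1, ∀ y ∈ Icc (-1 : ℝ) 1, |Function.swap f x y| ≤ B :=
    fun x hx y hy => hB y hy x hx
  refine ⟨(∑' p, √(2 * v1 f (2 ^ p) / 2 ^ p))
    * ∑' q, √(2 * v1 (Function.swap f) (2 ^ q) / 2 ^ q), ?_⟩
  rintro _ ⟨n, a, b, m, c, d, hab, hcd, rfl⟩
  have hrow : ∀ i (t : Finset (Fin m)),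
      ∑ j ∈ t, |f (a i) (c j) - f (a i) (d j) - f (b i) (c j) + f (b i) (d j)|
        ≤ 2 * v1 (Function.swap f) t.card := by
    intro i t
    convert sum_abs_mixed_le_two_mul_v1 hB' (hab.left_mem_Icc i) (hab.right_mem_Icc i) hcd t
      using 3
    simp only [Function.swap, sub_right_comm]
  calc _ ≤ (∑ p ∈ Finset.range n, √(2 * v1 f (2 ^ p) / 2 ^ p))
        * ∑ q ∈ Finset.range m, √(2 * v1 (Function.swap f) (2 ^ q) / 2 ^ q) :=
        sum_div_mul_le_of_sum_le _ (fun _ _ => abs_nonneg _)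
          ((v1_mono hB).const_mul zero_le_two) ((v1_mono hB').const_mul zero_le_two)
          (fun k => mul_nonneg zero_le_two (v1_nonneg _ k))
          (fun k => mul_nonneg zero_le_two (v1_nonneg _ k))
          (fun j t => sum_abs_mixed_le_two_mul_v1 hB (hcd.left_mem_Icc j) (hcd.right_mem_Icc j)
            hab t)
          hrow
    _ ≤ _ := mul_le_mul (hs₁.sum_le_tsum _ fun _ _ => Real.sqrt_nonneg _)
        (hs₂.sum_le_tsum _ fun _ _ => Real.sqrt_nonneg _)
        (Finset.sum_nonneg fun _ _ => Real.sqrt_nonneg _) (tsum_nonneg fun _ => Real.sqrt_nonneg _)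

end HarmonicVariation

/-- if `f` is bounded and `∑ √(v_j(n,f))/n^{3/2} < ∞` for `j = 1,2`,
then `f ∈ HBV`. -/
theorem HBV_of_modulus_of_variation (f : ℝ → ℝ → ℝ) (B : ℝ)
    (hB : ∀ x ∈ Set.Icc (-1:ℝ) 1, ∀ y ∈ Set.Icc (-1:ℝ) 1, |f x y| ≤ B)
    (h1 : Summable fun n : ℕ => Real.sqrt (v1 f (n + 1)) / ((n:ℝ) + 1) ^ ((3:ℝ)/2))
    (h2 : Summable fun n : ℕ => Real.sqrt (v2 f (n + 1)) / ((n:ℝ) + 1) ^ ((3:ℝ)/2)) :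
    HBV f := by
  have hB' : ∀ x ∈ Icc (-1 : ℝ) 1, ∀ y ∈ Icc (-1 : ℝ) 1, |Function.swap f x y| ≤ B :=
    fun x hx y hy => hB y hy x hx
  have hs₁ := summable_sqrt_two_mul_v1_div_two_pow hB h1
  -- `v2 f` and `V2set harm f` are `v1` and `V1set harm` of `Function.swap f` by definition.
  have hs₂ := summable_sqrt_two_mul_v1_div_two_pow hB' h2
  exact ⟨bddAbove_V1set_harm hB hs₁, bddAbove_V1set_harm hB' hs₂,
    bddAbove_V12set_harm hB hs₁ hs₂⟩
end
end

section
/- For every ε > 0 there is a constant c(ε) such that: if −1 + ε ≤ x ≤ 1 − ε and s_{n−1} = x + (n−1)(1−x)/n, then ∫_{s_{n−1}}^{1} |K_n(x,s)| ds ≤ c(ε) / n^{3/4}, where K_n is the Legendre Dirichlet kernel. -/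
/-!
Write `P n` for the Legendre polynomials. Their orthogonality follows from Legendre's equation
through a Wronskian, and integrating `(x P n(x)²)'` over `[-1, 1]` gives `∫ P n² = 2/(2n+1)`;
hence `p n = ±√((2n+1)/2) P n` and `2 K_n(x,s) = ∑_{k<n} (2k+1) P k(x) P k(s)`.
By Christoffel–Darboux, `2 (x - s) K_{n+1}(x,s) = (n+1) (P (n+1)(x) P n(s) - P n(x) P (n+1)(s))`.
The function `u(θ) = √(sin θ) P n(cos θ)` solves `u'' + Q u = 0` with
`Q(θ) = (n+½)² + 1/(4 sin² θ)` decreasing on `(0, π/2]`, so Sonin's function `u² + u'²/Q`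
increases there; comparing with `θ = π/2` gives `√(1 - x²) P n(x)² ≤ 2/(n+1)`. Together:
`|K_n(x,s)| |x - s| (1-x²)^{1/4} (1-s²)^{1/4} ≤ 2`. On the tail `s ≥ s_{n-1}` (for `n ≥ 2`)
one has `s - x ≥ ε/2`, so `|K_n(x,s)| ≤ 4 ε^{-7/4} (1-s)^{-1/4}`, whose integral over
`[s_{n-1}, 1]` is `O(((1-x)/n)^{3/4})`.
-/

open MeasureTheory Set Filter Real

noncomputable section

open Polynomial intervalIntegral

/-- The Legendre polynomials, through Bonnet's recursion (normalized by `P n 1 = 1`). -/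
def legendreP : ℕ → ℝ[X]
  | 0 => 1
  | 1 => X
  | n + 2 => C ((2 * (n : ℝ) + 3) / (n + 2)) * (X * legendreP (n + 1))
      - C (((n : ℝ) + 1) / (n + 2)) * legendreP n

@[simp] lemma legendreP_zero : legendreP 0 = 1 := rfl
@[simp] lemma legendreP_one : legendreP 1 = X := rfl

lemma legendreP_bonnet (n : ℕ) :
    ((n : ℝ[X]) + 2) * legendreP (n + 2)
      = (2 * (n : ℝ[X]) + 3) * (X * legendreP (n + 1)) - ((n : ℝ[X]) + 1) * legendreP n := by
  have h : (n : ℝ) + 2 ≠ 0 := by positivity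
  have hC : ∀ a b : ℝ, (C a : ℝ[X]) * C b = C (a * b) := fun a b => (C_mul).symm
  have h2 : ((n : ℝ[X]) + 2) = C ((n : ℝ) + 2) := by simp [map_ofNat]
  have h3 : (2 * (n : ℝ[X]) + 3) = C (2 * (n : ℝ) + 3) := by simp [map_ofNat]
  have h1 : ((n : ℝ[X]) + 1) = C ((n : ℝ) + 1) := by simp
  simp only [legendreP, mul_sub, ← mul_assoc, h1, h2, h3, hC, mul_div_cancel₀ _ h]

lemma eval_legendreP_bonnet (n : ℕ) (x : ℝ) :
    ((n : ℝ) + 2) * (legendreP (n + 2)).eval x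
      = (2 * n + 3) * (x * (legendreP (n + 1)).eval x) - (n + 1) * (legendreP n).eval x := by
  simpa using congrArg (eval x) (legendreP_bonnet n)

lemma degree_legendreP_and_leadingCoeff_pos (n : ℕ) :
    (legendreP n).degree = n ∧ 0 < (legendreP n).leadingCoeff := by
  induction n using Nat.twoStepInduction with
  | zero => simp
  | one => simp
  | more n ih₀ ih₁ =>
    have ha : (0 : ℝ) < (2 * n + 3) / (n + 2) := by positivity
    have hb : ((n : ℝ) + 1) / (n + 2) ≠ 0 := by positivity
    have hlead : (C ((2 * (n : ℝ) + 3) / (n + 2)) * (X * legendreP (n + 1))).degree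
        = ((n + 2 : ℕ) : WithBot ℕ) := by
      rw [degree_C_mul ha.ne', degree_mul, degree_X, ih₁.1]
      norm_cast
      omega
    have hlow :
        (C (((n : ℝ) + 1) / (n + 2)) * legendreP n).degree < ((n + 2 : ℕ) : WithBot ℕ) := by
      rw [degree_C_mul hb, ih₀.1]
      exact_mod_cast (by omega : n < n + 2)
    rw [← hlead] at hlow
    rw [legendreP, degree_sub_eq_left_of_degree_lt hlow, hlead,
      leadingCoeff_sub_of_degree_lt hlow, leadingCoeff_mul, leadingCoeff_mul, leadingCoeff_C,
      leadingCoeff_X, one_mul]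
    exact ⟨rfl, mul_pos ha ih₁.2⟩

lemma degree_legendreP (n : ℕ) : (legendreP n).degree = n :=
  (degree_legendreP_and_leadingCoeff_pos n).1

lemma leadingCoeff_legendreP_pos (n : ℕ) : 0 < (legendreP n).leadingCoeff :=
  (degree_legendreP_and_leadingCoeff_pos n).2

lemma derivative_legendreP_recurrences (n : ℕ) :
    derivative (legendreP (n + 1))
      = X * derivative (legendreP n) + ((n : ℝ[X]) + 1) * legendreP n ∧
    X * derivative (legendreP (n + 1))
      = derivative (legendreP n) + ((n : ℝ[X]) + 1) * legendreP (n + 1) := by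
  induction n with
  | zero => simp
  | succ n ih =>
    have hbonnet := congrArg derivative (legendreP_bonnet n)
    simp only [derivative_mul, derivative_sub, derivative_add, derivative_natCast,
      derivative_ofNat, derivative_one, derivative_X, zero_mul, zero_add, one_mul] at hbonnet
    have hn : ((n : ℝ[X]) + 2) ≠ 0 := by
      rw [show ((n : ℝ[X]) + 2) = C ((n : ℝ) + 2) by simp [map_ofNat]]
      exact C_ne_zero.mpr (by positivity)
    obtain ⟨ih₁, ih₂⟩ := ih
    push_cast
    constructor
    · apply mul_left_cancel₀ hn
      linear_combination hbonnet + ((n : ℝ[X]) + 1) * ih₂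
    · apply mul_left_cancel₀ hn
      linear_combination X * hbonnet - ((n : ℝ[X]) + 2) * legendreP_bonnet n
        + (2 * (n : ℝ[X]) + 3) * X * ih₂ - ((n : ℝ[X]) + 2) * ih₁

lemma derivative_legendreP_succ (n : ℕ) :
    derivative (legendreP (n + 1))
      = X * derivative (legendreP n) + ((n : ℝ[X]) + 1) * legendreP n :=
  (derivative_legendreP_recurrences n).1

lemma X_mul_derivative_legendreP_succ (n : ℕ) :
    X * derivative (legendreP (n + 1))
      = derivative (legendreP n) + ((n : ℝ[X]) + 1) * legendreP (n + 1) :=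
  (derivative_legendreP_recurrences n).2

lemma legendreP_ode (n : ℕ) :
    (1 - X ^ 2) * derivative (derivative (legendreP n)) - 2 * X * derivative (legendreP n)
      + ((n : ℝ[X]) * ((n : ℝ[X]) + 1)) * legendreP n = 0 := by
  cases n with
  | zero => simp
  | succ n =>
    have h := congrArg derivative (show (X ^ 2 - 1) * derivative (legendreP (n + 1))
        = ((n : ℝ[X]) + 1) * (X * legendreP (n + 1) - legendreP n) by
      linear_combination X * X_mul_derivative_legendreP_succ n - derivative_legendreP_succ n)
    simp only [derivative_mul, derivative_sub, derivative_add, derivative_natCast, derivative_one,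
      derivative_X_sq, map_ofNat, derivative_X, zero_mul, zero_add, one_mul] at h
    push_cast
    linear_combination -h - ((n : ℝ[X]) + 1) * X_mul_derivative_legendreP_succ n

@[simp] lemma eval_one_legendreP (n : ℕ) : (legendreP n).eval 1 = 1 := by
  induction n using Nat.twoStepInduction with
  | zero => simp
  | one => simp
  | more n ih₀ ih₁ =>
    have h := eval_legendreP_bonnet n 1
    rw [ih₀, ih₁] at h
    exact mul_left_cancel₀ (by positivity : (n : ℝ) + 2 ≠ 0) (by linear_combination h)

lemma eval_neg_legendreP (n : ℕ) (x : ℝ) :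
    (legendreP n).eval (-x) = (-1) ^ n * (legendreP n).eval x := by
  induction n using Nat.twoStepInduction with
  | zero => simp
  | one => simp
  | more n ih₀ ih₁ =>
    have h := eval_legendreP_bonnet n (-x)
    rw [ih₀, ih₁] at h
    refine mul_left_cancel₀ (by positivity : (n : ℝ) + 2 ≠ 0) ?_
    linear_combination h - (-1) ^ n * eval_legendreP_bonnet n x

lemma sq_eval_neg_legendreP (n : ℕ) (x : ℝ) :
    (legendreP n).eval (-x) ^ 2 = (legendreP n).eval x ^ 2 := by
  rw [eval_neg_legendreP, mul_pow, ← pow_mul, pow_mul', neg_one_sq, one_pow, one_mul]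

lemma sq_eval_zero_legendreP_le (n : ℕ) : (legendreP n).eval 0 ^ 2 ≤ 1 / ((n : ℝ) + 1) := by
  induction n using Nat.twoStepInduction with
  | zero => simp
  | one => simp
  | more n ih₀ _ =>
    have h : (legendreP (n + 2)).eval 0 = -(((n : ℝ) + 1) / (n + 2)) * (legendreP n).eval 0 := by
      field_simp
      linear_combination eval_legendreP_bonnet n 0
    rw [h, mul_pow, neg_sq]
    calc (((n : ℝ) + 1) / (n + 2)) ^ 2 * (legendreP n).eval 0 ^ 2
        ≤ (((n : ℝ) + 1) / (n + 2)) ^ 2 * (1 / ((n : ℝ) + 1)) := by gcongr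
      _ ≤ 1 / (((n + 2 : ℕ) : ℝ) + 1) := by
        push_cast
        rw [div_pow, div_mul_div_comm, div_le_div_iff₀ (by positivity) (by positivity)]
        nlinarith

lemma eval_zero_derivative_legendreP_succ (n : ℕ) :
    (derivative (legendreP (n + 1))).eval 0 = ((n : ℝ) + 1) * (legendreP n).eval 0 := by
  simpa using congrArg (eval 0) (derivative_legendreP_succ n)

def polyIntegral : ℝ[X] →ₗ[ℝ] ℝ where
  toFun q := ∫ x in (-1 : ℝ)..1, q.eval x
  map_add' f g := by
    simp only [eval_add]
    exact integral_add (f.continuous.intervalIntegrable _ _) (g.continuous.intervalIntegrable _ _)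
  map_smul' c f := by simp [intervalIntegral.integral_const_mul]

def polyInner : ℝ[X] →ₗ[ℝ] ℝ[X] →ₗ[ℝ] ℝ := (LinearMap.mul ℝ ℝ[X]).compr₂ polyIntegral

lemma polyIntegral_apply (q : ℝ[X]) : polyIntegral q = ∫ x in (-1 : ℝ)..1, q.eval x := rfl

lemma polyInner_apply (f g : ℝ[X]) :
    polyInner f g = ∫ x in (-1 : ℝ)..1, f.eval x * g.eval x := by
  simp [polyInner, polyIntegral_apply]

lemma polyIntegral_derivative (q : ℝ[X]) :
    polyIntegral (derivative q) = q.eval 1 - q.eval (-1) :=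
  integral_eq_sub_of_hasDerivAt (fun x _ => q.hasDerivAt x)
    ((derivative q).continuous.intervalIntegrable _ _)

lemma polyInner_eq_zero_of_degree_lt (S : Sequence ℝ) {f g : ℝ[X]} {n : ℕ}
    (hS : ∀ i < n, polyInner f (S i) = 0) (hg : g.degree < n) : polyInner f g = 0 := by
  have hg : g ∈ Submodule.span ℝ (S '' Set.Iio n) := by
    rw [S.span_degreeLT (fun i _ => (leadingCoeff_ne_zero.mpr (S.ne_zero i)).isUnit)]
    exact mem_degreeLT.mpr hg
  have hker : Submodule.span ℝ (S '' Set.Iio n) ≤ LinearMap.ker (polyInner f) := by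
    rw [Submodule.span_le]
    rintro _ ⟨i, hi, rfl⟩
    exact hS i hi
  exact hker hg

/-- The Wronskian of two solutions of Legendre's equation, weighted by `1 - X ^ 2`,
is an antiderivative of `(m(m+1) - n(n+1)) P n P m` vanishing at `±1`. -/
lemma polyInner_legendreP_of_ne {n m : ℕ} (h : n ≠ m) :
    polyInner (legendreP n) (legendreP m) = 0 := by
  set W := (1 - X ^ 2) * (derivative (legendreP n) * legendreP m
    - legendreP n * derivative (legendreP m))
  have hW : derivative W
      = ((m : ℝ) * (m + 1) - n * (n + 1)) • (legendreP n * legendreP m) := by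
    simp only [W, derivative_mul, derivative_one, derivative_X_sq, map_ofNat,
      smul_eq_C_mul, map_sub, map_mul, map_add, map_natCast, map_one]
    linear_combination legendreP m * legendreP_ode n - legendreP n * legendreP_ode m
  have hne : (m : ℝ) * (m + 1) - n * (n + 1) ≠ 0 := by
    have : (m : ℝ) ≠ n := by exact_mod_cast h.symm
    intro hc
    exact this (by nlinarith)
  have := polyIntegral_derivative W
  rw [hW, map_smul, smul_eq_mul] at this
  simp only [W, eval_mul, eval_sub, eval_one, eval_pow, eval_X] at this
  norm_num at this
  exact this.resolve_left hne

lemma polyInner_legendreP_of_degree_lt {n : ℕ} {g : ℝ[X]} (hg : g.degree < n) :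
    polyInner (legendreP n) g = 0 :=
  polyInner_eq_zero_of_degree_lt ⟨legendreP, degree_legendreP⟩
    (fun _ hi => polyInner_legendreP_of_ne (Nat.ne_of_gt hi)) hg

lemma polyInner_legendreP_X_mul_derivative (n : ℕ) :
    polyInner (legendreP n) (X * derivative (legendreP n))
      = n * polyInner (legendreP n) (legendreP n) := by
  cases n with
  | zero => simp
  | succ m =>
    have hlow : (derivative (legendreP m)).degree < (m + 1 : ℕ) := by
      refine (degree_derivative_lt fun h => ?_).trans_le ?_
      · simpa [h] using leadingCoeff_legendreP_pos m
      · rw [degree_legendreP]; exact_mod_cast m.le_succ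
    have hsmul :
        ((m : ℝ[X]) + 1) * legendreP (m + 1) = ((m : ℝ) + 1) • legendreP (m + 1) := by
      simp [smul_eq_C_mul]
    rw [X_mul_derivative_legendreP_succ, hsmul, map_add, map_smul,
      polyInner_legendreP_of_degree_lt hlow]
    simp

lemma polyInner_legendreP_self (n : ℕ) :
    polyInner (legendreP n) (legendreP n) = 2 / (2 * n + 1) := by
  have h := polyIntegral_derivative (X * legendreP n ^ 2)
  rw [show derivative (X * legendreP n ^ 2)
      = legendreP n * legendreP n + (2 : ℝ) • (legendreP n * (X * derivative (legendreP n))) by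
    simp only [derivative_mul, derivative_X, derivative_sq, smul_eq_C_mul, map_ofNat]; ring] at h
  simp only [map_add, map_smul, eval_mul, eval_X, eval_pow, eval_one_legendreP,
    sq_eval_neg_legendreP] at h
  change polyInner _ _ + 2 * polyInner _ _ = _ at h
  rw [polyInner_legendreP_X_mul_derivative] at h
  rw [eq_div_iff (by positivity)]
  linear_combination h

lemma IsOrthonormalLegendre.polyInner_eq {p : ℕ → ℝ[X]} (hp : IsOrthonormalLegendre p) (n m : ℕ) :
    polyInner (p n) (p m) = if n = m then 1 else 0 := by
  rw [polyInner_apply, hp.2.2]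

lemma IsOrthonormalLegendre.eq_smul_of_orthogonal {p : ℕ → ℝ[X]}
    (hp : IsOrthonormalLegendre p) {q : ℝ[X]} {n : ℕ} (hq : q.degree ≤ n)
    (horth : ∀ g : ℝ[X], g.degree < n → polyInner q g = 0) :
    q = polyInner q (p n) • p n := by
  let S : Sequence ℝ := ⟨p, hp.1⟩
  have hmem : q ∈ Submodule.span ℝ (S '' ↑(Finset.range (n + 1))) := by
    rw [Finset.coe_range,
      S.span_degreeLT fun i _ => (leadingCoeff_ne_zero.mpr (S.ne_zero i)).isUnit, mem_degreeLT]
    exact hq.trans_lt (by exact_mod_cast n.lt_succ_self)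
  obtain ⟨c, rfl⟩ := (Submodule.mem_span_image_finset_iff_exists_fun' ℝ).mp hmem
  have hcoeff : ∀ j ≤ n, polyInner (∑ i ∈ Finset.range (n + 1), c i • p i) (p j) = c j := by
    intro j hj
    simp only [map_sum, map_smul, LinearMap.sum_apply, LinearMap.smul_apply, hp.polyInner_eq,
      smul_eq_mul, mul_ite, mul_one, mul_zero, Finset.sum_ite_eq', Finset.mem_range]
    simp [Nat.lt_succ_of_le hj]
  rw [hcoeff n le_rfl, Finset.sum_range_succ, Finset.sum_eq_zero, zero_add]
  intro j hj
  have hj : j < n := Finset.mem_range.mp hj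
  rw [← hcoeff j hj.le, horth _ (by rw [hp.1 j]; exact_mod_cast hj), zero_smul]

lemma IsOrthonormalLegendre.eval_mul_eval {p : ℕ → ℝ[X]} (hp : IsOrthonormalLegendre p)
    (n : ℕ) (x s : ℝ) :
    (p n).eval x * (p n).eval s
      = (2 * n + 1) / 2 * ((legendreP n).eval x * (legendreP n).eval s) := by
  set b := polyInner (legendreP n) (p n)
  have hP : legendreP n = b • p n :=
    hp.eq_smul_of_orthogonal (degree_legendreP n).le fun _ => polyInner_legendreP_of_degree_lt
  have hb : b ^ 2 = 2 / (2 * n + 1) := by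
    have h := polyInner_legendreP_self n
    simp only [hP, map_smul, LinearMap.smul_apply, hp.polyInner_eq, if_pos, smul_eq_mul,
      mul_one] at h
    rw [sq, h]
  rw [hP, eval_smul, eval_smul, smul_eq_mul, smul_eq_mul]
  have : (2 * (n : ℝ) + 1) / 2 * b ^ 2 = 1 := by rw [hb]; field_simp
  linear_combination (-(p n).eval x * (p n).eval s) * this

lemma IsOrthonormalLegendre.legKernel_eq {p : ℕ → ℝ[X]} (hp : IsOrthonormalLegendre p)
    (n : ℕ) (x s : ℝ) :
    LegKernel p n x s = (∑ k ∈ Finset.range n,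
      (2 * (k : ℝ) + 1) * ((legendreP k).eval x * (legendreP k).eval s)) / 2 := by
  rw [Finset.sum_div]
  exact Finset.sum_congr rfl fun k _ => by rw [hp.eval_mul_eval]; ring

lemma monotoneOn_sonin {u u' Q Q' : ℝ → ℝ} {D : Set ℝ} (hD : Convex ℝ D)
    (hu : ∀ θ ∈ D, HasDerivAt u (u' θ) θ) (hu' : ∀ θ ∈ D, HasDerivAt u' (-(Q θ * u θ)) θ)
    (hQ : ∀ θ ∈ D, HasDerivAt Q (Q' θ) θ) (hQpos : ∀ θ ∈ D, 0 < Q θ)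
    (hQ' : ∀ θ ∈ D, Q' θ ≤ 0) :
    MonotoneOn (fun θ => u θ ^ 2 + u' θ ^ 2 / Q θ) D := by
  have hF : ∀ θ ∈ D, HasDerivAt (fun θ => u θ ^ 2 + u' θ ^ 2 / Q θ)
      (-(u' θ ^ 2 * Q' θ) / Q θ ^ 2) θ := by
    intro θ hθ
    refine (((hu θ hθ).pow 2).add
      (((hu' θ hθ).pow 2).div (hQ θ hθ) (hQpos θ hθ).ne')).congr_deriv ?_
    field_simp [(hQpos θ hθ).ne']
    simp only [Pi.pow_apply]
    ring
  refine monotoneOn_of_hasDerivWithinAt_nonneg hD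
    (fun θ hθ => (hF θ hθ).continuousAt.continuousWithinAt)
    (fun θ hθ => (hF θ (interior_subset hθ)).hasDerivWithinAt) fun θ hθ => ?_
  have : 0 ≤ -(u' θ ^ 2 * Q' θ) := by nlinarith [sq_nonneg (u' θ), hQ' θ (interior_subset hθ)]
  positivity

/-- `P n (cos θ)` in Liouville normal form: `legendreU n'' + legendreQ n * legendreU n = 0`. -/
def legendreU (n : ℕ) (θ : ℝ) : ℝ := √(sin θ) * (legendreP n).eval (cos θ)

def legendreU' (n : ℕ) (θ : ℝ) : ℝ :=
  √(sin θ) * (cos θ * (legendreP n).eval (cos θ) / (2 * sin θ)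
    - sin θ * (derivative (legendreP n)).eval (cos θ))

def legendreQ (n : ℕ) (θ : ℝ) : ℝ := ((n : ℝ) + 1 / 2) ^ 2 + (4 * sin θ ^ 2)⁻¹

lemma hasDerivAt_sqrt_sin {θ : ℝ} (hθ : 0 < sin θ) :
    HasDerivAt (fun θ => √(sin θ)) (√(sin θ) * (cos θ / (2 * sin θ))) θ := by
  refine ((Real.hasDerivAt_sqrt hθ.ne').comp θ (Real.hasDerivAt_sin θ)).congr_deriv ?_
  field_simp
  rw [Real.sq_sqrt hθ.le]
  ring

lemma hasDerivAt_eval_cos (q : ℝ[X]) (θ : ℝ) :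
    HasDerivAt (fun θ => q.eval (cos θ)) (-(sin θ * (derivative q).eval (cos θ))) θ :=
  ((q.hasDerivAt (cos θ)).comp θ (Real.hasDerivAt_cos θ)).congr_deriv (by ring)

lemma hasDerivAt_legendreU (n : ℕ) {θ : ℝ} (hθ : 0 < sin θ) :
    HasDerivAt (legendreU n) (legendreU' n θ) θ := by
  refine ((hasDerivAt_sqrt_sin hθ).mul (hasDerivAt_eval_cos _ θ)).congr_deriv ?_
  unfold legendreU'
  field_simp
  ring

lemma hasDerivAt_legendreU' (n : ℕ) {θ : ℝ} (hθ : 0 < sin θ) :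
    HasDerivAt (legendreU' n) (-(legendreQ n θ * legendreU n θ)) θ := by
  have hR := (((Real.hasDerivAt_cos θ).mul (hasDerivAt_eval_cos (legendreP n) θ)).div
      ((Real.hasDerivAt_sin θ).const_mul 2) (by positivity)).sub
    ((Real.hasDerivAt_sin θ).mul (hasDerivAt_eval_cos (derivative (legendreP n)) θ))
  refine ((hasDerivAt_sqrt_sin hθ).mul hR).congr_deriv ?_
  have hode := congrArg (eval (cos θ)) (legendreP_ode n)
  simp only [eval_add, eval_sub, eval_mul, eval_one, eval_pow, eval_X, eval_natCast, eval_ofNat,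
    eval_zero] at hode
  have hpyth := sin_sq_add_cos_sq θ
  simp only [legendreQ, legendreU, Pi.mul_apply, Pi.div_apply, Pi.sub_apply]
  field_simp
  linear_combination (16 * sin θ ^ 2) * hode + (16 * sin θ ^ 2 *
    (derivative (derivative (legendreP n))).eval (cos θ) - 4 * (legendreP n).eval (cos θ)) * hpyth

lemma hasDerivAt_legendreQ (n : ℕ) {θ : ℝ} (hθ : 0 < sin θ) :
    HasDerivAt (legendreQ n) (-(cos θ / (2 * sin θ ^ 3))) θ := by
  have h := ((((Real.hasDerivAt_sin θ).pow 2).const_mul 4).inv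
    (by positivity : 4 * sin θ ^ 2 ≠ 0)).const_add (((n : ℝ) + 1 / 2) ^ 2)
  exact h.congr_deriv (by simp only [Pi.pow_apply]; field_simp; ring)

lemma sq_eval_zero_derivative_legendreP_le (n : ℕ) :
    (derivative (legendreP n)).eval 0 ^ 2 ≤ n := by
  cases n with
  | zero => simp
  | succ m =>
    rw [eval_zero_derivative_legendreP_succ, mul_pow]
    calc ((m : ℝ) + 1) ^ 2 * (legendreP m).eval 0 ^ 2
        ≤ ((m : ℝ) + 1) ^ 2 * (1 / ((m : ℝ) + 1)) := by gcongr; exact sq_eval_zero_legendreP_le m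
      _ = ((m + 1 : ℕ) : ℝ) := by push_cast; field_simp

lemma legendreU_sq_le (n : ℕ) {θ : ℝ} (hθ : θ ∈ Set.Ioc 0 (π / 2)) :
    legendreU n θ ^ 2 ≤ 2 / ((n : ℝ) + 1) := by
  have hsin : ∀ θ ∈ Set.Ioc 0 (π / 2), 0 < sin θ := fun θ hθ =>
    sin_pos_of_pos_of_lt_pi hθ.1 (by linarith [hθ.2, pi_pos])
  have hQpos : ∀ θ ∈ Set.Ioc 0 (π / 2), 0 < legendreQ n θ := fun θ hθ => by
    have := hsin θ hθ; unfold legendreQ; positivity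
  have hmono := monotoneOn_sonin (convex_Ioc 0 (π / 2))
    (fun θ hθ => hasDerivAt_legendreU n (hsin θ hθ))
    (fun θ hθ => hasDerivAt_legendreU' n (hsin θ hθ))
    (fun θ hθ => hasDerivAt_legendreQ n (hsin θ hθ)) hQpos
    (fun θ hθ => by
      have := hsin θ hθ
      have : 0 ≤ cos θ := cos_nonneg_of_mem_Icc ⟨by linarith [hθ.1, pi_pos], hθ.2⟩
      rw [neg_nonpos]; positivity)
  have hend : π / 2 ∈ Set.Ioc 0 (π / 2) := ⟨by positivity, le_rfl⟩
  have hθend := hmono hθ hend hθ.2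
  have hU : legendreU n (π / 2) = (legendreP n).eval 0 := by simp [legendreU]
  have hU' : legendreU' n (π / 2) = -(derivative (legendreP n)).eval 0 := by simp [legendreU']
  have hQ : legendreQ n (π / 2) = ((n : ℝ) + 1 / 2) ^ 2 + 1 / 4 := by norm_num [legendreQ]
  dsimp only at hθend
  rw [hU, hU', hQ, neg_sq] at hθend
  have hrest : 0 ≤ legendreU' n θ ^ 2 / legendreQ n θ := by
    have := hQpos θ hθ; positivity
  have hderiv : (derivative (legendreP n)).eval 0 ^ 2 / (((n : ℝ) + 1 / 2) ^ 2 + 1 / 4)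
      ≤ 1 / ((n : ℝ) + 1) := by
    rw [div_le_div_iff₀ (by positivity) (by positivity)]
    nlinarith [sq_eval_zero_derivative_legendreP_le n]
  linarith [sq_eval_zero_legendreP_le n,
    show 2 / ((n : ℝ) + 1) = 1 / (n + 1) + 1 / (n + 1) by ring]

theorem sqrt_one_sub_sq_mul_sq_eval_legendreP_le (n : ℕ) (x : ℝ) :
    √(1 - x ^ 2) * (legendreP n).eval x ^ 2 ≤ 2 / ((n : ℝ) + 1) := by
  wlog hx : 0 ≤ x generalizing x
  · simpa [sq_eval_neg_legendreP] using this (-x) (by linarith)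
  rcases lt_or_ge x 1 with hx1 | hx1
  · have hθ : arccos x ∈ Set.Ioc 0 (π / 2) :=
      ⟨arccos_pos.mpr hx1, arccos_le_pi_div_two.mpr hx⟩
    have h := legendreU_sq_le n hθ
    rwa [legendreU, mul_pow, sin_arccos, cos_arccos (by linarith) hx1.le,
      sq_sqrt (sqrt_nonneg _)] at h
  · rw [sqrt_eq_zero'.mpr (by nlinarith), zero_mul]
    positivity

lemma christoffel_darboux (n : ℕ) (x s : ℝ) :
    (x - s) * ∑ k ∈ Finset.range (n + 1),
        (2 * (k : ℝ) + 1) * ((legendreP k).eval x * (legendreP k).eval s)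
      = ((n : ℝ) + 1) * ((legendreP (n + 1)).eval x * (legendreP n).eval s
        - (legendreP n).eval x * (legendreP (n + 1)).eval s) := by
  induction n with
  | zero => simp
  | succ n ih =>
    rw [Finset.sum_range_succ, mul_add, ih]
    push_cast
    linear_combination (legendreP (n + 1)).eval x * eval_legendreP_bonnet n s
      - (legendreP (n + 1)).eval s * eval_legendreP_bonnet n x

lemma abs_eval_legendreP_mul_rpow_le (n : ℕ) {x : ℝ} (hx : x ∈ Set.Icc (-1 : ℝ) 1) :
    |(legendreP n).eval x| * (1 - x ^ 2) ^ (1 / 4 : ℝ) ≤ √(2 / ((n : ℝ) + 1)) := by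
  have hx2 : 0 ≤ 1 - x ^ 2 := by nlinarith [hx.1, hx.2]
  have hw : ((1 - x ^ 2) ^ (1 / 4 : ℝ)) ^ 2 = √(1 - x ^ 2) := by
    rw [← Real.rpow_natCast, ← Real.rpow_mul hx2, Real.sqrt_eq_rpow]
    norm_num
  rw [Real.le_sqrt (by positivity) (by positivity), mul_pow, sq_abs, hw, mul_comm]
  exact sqrt_one_sub_sq_mul_sq_eval_legendreP_le n x

theorem IsOrthonormalLegendre.abs_legKernel_mul_le {p : ℕ → ℝ[X]}
    (hp : IsOrthonormalLegendre p) (n : ℕ) {x s : ℝ} (hx : x ∈ Set.Icc (-1 : ℝ) 1)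
    (hs : s ∈ Set.Icc (-1 : ℝ) 1) :
    |LegKernel p n x s| * |x - s| * ((1 - x ^ 2) ^ (1 / 4 : ℝ) * (1 - s ^ 2) ^ (1 / 4 : ℝ))
      ≤ 2 := by
  cases n with
  | zero => simp [LegKernel]
  | succ m =>
    set W : ℕ → ℝ → ℝ := fun k y => |(legendreP k).eval y| * (1 - y ^ 2) ^ (1 / 4 : ℝ)
    have hW : ∀ j, m ≤ j → ∀ y ∈ Set.Icc (-1 : ℝ) 1, W j y ≤ √(2 / ((m : ℝ) + 1)) := by
      intro j hj y hy
      refine (abs_eval_legendreP_mul_rpow_le j hy).trans (Real.sqrt_le_sqrt ?_)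
      gcongr
    have hwx := Real.rpow_nonneg (show 0 ≤ 1 - x ^ 2 by nlinarith [hx.1, hx.2]) (1 / 4 : ℝ)
    have hws := Real.rpow_nonneg (show 0 ≤ 1 - s ^ 2 by nlinarith [hs.1, hs.2]) (1 / 4 : ℝ)
    have hWW : ∀ j k, m ≤ j → m ≤ k → W j x * W k s ≤ 2 / ((m : ℝ) + 1) := fun j k hj hk =>
      (mul_le_mul (hW j hj x hx) (hW k hk s hs) (mul_nonneg (abs_nonneg _) hws)
        (Real.sqrt_nonneg _)).trans_eq (Real.mul_self_sqrt (by positivity))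
    have hK : (x - s) * LegKernel p (m + 1) x s = ((m : ℝ) + 1) / 2 * ((legendreP (m + 1)).eval x
        * (legendreP m).eval s - (legendreP m).eval x * (legendreP (m + 1)).eval s) := by
      rw [hp.legKernel_eq]
      linear_combination christoffel_darboux m x s / 2
    calc |LegKernel p (m + 1) x s| * |x - s|
          * ((1 - x ^ 2) ^ (1 / 4 : ℝ) * (1 - s ^ 2) ^ (1 / 4 : ℝ))
        = ((m : ℝ) + 1) / 2 * (|(legendreP (m + 1)).eval x * (legendreP m).eval s
            - (legendreP m).eval x * (legendreP (m + 1)).eval s|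
            * ((1 - x ^ 2) ^ (1 / 4 : ℝ) * (1 - s ^ 2) ^ (1 / 4 : ℝ))) := by
          rw [mul_comm |_|, ← abs_mul, hK, abs_mul,
            abs_of_pos (by positivity : (0 : ℝ) < (m + 1) / 2), mul_assoc]
      _ ≤ ((m : ℝ) + 1) / 2 * (W (m + 1) x * W m s + W m x * W (m + 1) s) := by
          gcongr
          refine (mul_le_mul_of_nonneg_right (abs_sub _ _) (by positivity)).trans_eq ?_
          simp only [W, abs_mul]
          ring
      _ ≤ ((m : ℝ) + 1) / 2 * (2 / ((m : ℝ) + 1) + 2 / ((m : ℝ) + 1)) := by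
          gcongr
          · exact hWW _ _ m.le_succ le_rfl
          · exact hWW _ _ le_rfl m.le_succ
      _ = 2 := by field_simp; ring

lemma integral_le_of_le_mul_sub_rpow {f : ℝ → ℝ} {a b C r : ℝ} (hab : a ≤ b) (hr : -1 < r)
    (hf : IntervalIntegrable f volume a b) (h : ∀ s ∈ Set.Ioo a b, f s ≤ C * (b - s) ^ r) :
    ∫ s in a..b, f s ≤ C * ((b - a) ^ (r + 1) / (r + 1)) := by
  have hg : IntervalIntegrable (fun s => (b - s) ^ r) volume a b := by
    simpa using (intervalIntegrable_rpow' (a := b - a) (b := 0) hr).comp_sub_left b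
  refine (integral_mono_on_of_le_Ioo hab hf (hg.const_mul C) h).trans_eq ?_
  rw [intervalIntegral.integral_const_mul, intervalIntegral.integral_comp_sub_left
    (fun u => u ^ r), sub_self, integral_rpow (Or.inl hr),
    Real.zero_rpow (by linarith : r + 1 ≠ 0), sub_zero]

lemma continuous_legKernel {p : ℕ → ℝ[X]} (n : ℕ) (x : ℝ) :
    Continuous (LegKernel p n x) := by
  unfold LegKernel
  fun_prop

lemma IsOrthonormalLegendre.abs_legKernel_le_of_le_sub {p : ℕ → ℝ[X]}
    (hp : IsOrthonormalLegendre p) (n : ℕ) {ε x s : ℝ} (hε : 0 < ε)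
    (hx : x ∈ Set.Icc (-1 + ε) (1 - ε)) (hxs : ε / 2 ≤ s - x) (hs : s < 1) :
    |LegKernel p n x s| ≤ 4 / ε ^ (7 / 4 : ℝ) * (1 - s) ^ (-(1 / 4) : ℝ) := by
  have h1s : 0 < 1 - s := by linarith
  have hxI : x ∈ Set.Icc (-1 : ℝ) 1 := ⟨by linarith [hx.1], by linarith [hx.2]⟩
  have hsI : s ∈ Set.Icc (-1 : ℝ) 1 := ⟨by linarith [hx.1], hs.le⟩
  have hweight : ε ^ (7 / 4 : ℝ) / 2 * (1 - s) ^ (1 / 4 : ℝ)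
      ≤ |x - s| * ((1 - x ^ 2) ^ (1 / 4 : ℝ) * (1 - s ^ 2) ^ (1 / 4 : ℝ)) := by
    have hprod : ε ^ 3 * (1 - s) ≤ (1 - x ^ 2) * (1 - s ^ 2) := by
      have hx2 : ε ^ 2 ≤ 1 - x ^ 2 := by nlinarith [hx.1, hx.2]
      have hs2 : ε * (1 - s) ≤ 1 - s ^ 2 := by nlinarith [hx.1]
      calc ε ^ 3 * (1 - s) = ε ^ 2 * (ε * (1 - s)) := by ring
        _ ≤ (1 - x ^ 2) * (1 - s ^ 2) := by gcongr; nlinarith [hxI.1, hxI.2]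
    rw [← Real.mul_rpow (by nlinarith [hxI.1, hxI.2]) (by nlinarith [hsI.1, hsI.2])]
    calc ε ^ (7 / 4 : ℝ) / 2 * (1 - s) ^ (1 / 4 : ℝ)
        = ε / 2 * (ε ^ 3 * (1 - s)) ^ (1 / 4 : ℝ) := by
          rw [Real.mul_rpow (by positivity) h1s.le, ← Real.rpow_natCast,
            ← Real.rpow_mul hε.le, show (7 / 4 : ℝ) = 1 + (3 : ℕ) * (1 / 4) by norm_num,
            Real.rpow_add hε, Real.rpow_one]
          ring
      _ ≤ |x - s| * ((1 - x ^ 2) * (1 - s ^ 2)) ^ (1 / 4 : ℝ) := by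
          gcongr
          rw [abs_sub_comm, abs_of_pos (by linarith)]
          exact hxs
  have hK := hp.abs_legKernel_mul_le n hxI hsI
  rw [mul_assoc] at hK
  have hpos : 0 < ε ^ (7 / 4 : ℝ) / 2 * (1 - s) ^ (1 / 4 : ℝ) := by positivity
  calc |LegKernel p n x s| ≤ 2 / (ε ^ (7 / 4 : ℝ) / 2 * (1 - s) ^ (1 / 4 : ℝ)) := by
        rw [le_div_iff₀ hpos]
        exact (mul_le_mul_of_nonneg_left hweight (abs_nonneg _)).trans hK
    _ = 4 / ε ^ (7 / 4 : ℝ) * (1 - s) ^ (-(1 / 4) : ℝ) := by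
        rw [Real.rpow_neg h1s.le]
        field_simp
        norm_num

lemma IsOrthonormalLegendre.integral_abs_legKernel_tail_le {p : ℕ → ℝ[X]}
    (hp : IsOrthonormalLegendre p) {ε x : ℝ} {n : ℕ} (hε : 0 < ε) (hn : 2 ≤ n)
    (hx : x ∈ Set.Icc (-1 + ε) (1 - ε)) :
    (∫ s in (x + ((n : ℝ) - 1) * (1 - x) / n)..1, |LegKernel p n x s|)
      ≤ 4 / ε ^ (7 / 4 : ℝ) * (2 ^ (3 / 4 : ℝ) / (3 / 4)) / (n : ℝ) ^ (3 / 4 : ℝ) := by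
  have hn0 : (0 : ℝ) < n := by positivity
  set a := x + ((n : ℝ) - 1) * (1 - x) / n
  have h1a : 1 - a = (1 - x) / n := by simp only [a]; field_simp; ring
  have h1x : 0 < 1 - x := by linarith [hx.2]
  have hxs : ∀ s ∈ Set.Ioo a 1, ε / 2 ≤ s - x := by
    intro s hs
    have : (1 - x) / 2 ≤ a - x := by
      have : (2 : ℝ) ≤ n := by exact_mod_cast hn
      rw [show a - x = ((n : ℝ) - 1) * (1 - x) / n by ring, le_div_iff₀ hn0]
      nlinarith
    linarith [hs.1, hx.2]
  calc (∫ s in a..1, |LegKernel p n x s|)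
      ≤ 4 / ε ^ (7 / 4 : ℝ) * ((1 - a) ^ (-(1 / 4) + 1 : ℝ) / (-(1 / 4) + 1)) :=
        integral_le_of_le_mul_sub_rpow (r := -(1 / 4)) (by linarith [h1a, div_pos h1x hn0])
          (by norm_num) ((continuous_legKernel n x).abs.intervalIntegrable _ _)
          fun s hs => hp.abs_legKernel_le_of_le_sub n hε hx (hxs s hs) hs.2
    _ ≤ 4 / ε ^ (7 / 4 : ℝ) * (2 ^ (3 / 4 : ℝ) / (3 / 4)) / (n : ℝ) ^ (3 / 4 : ℝ) := by
        rw [h1a, Real.div_rpow h1x.le hn0.le, show -(1 / 4 : ℝ) + 1 = 3 / 4 by norm_num,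
          div_right_comm, mul_div_assoc]
        gcongr
        linarith [hx.1]

/-- tail integral bound for the Legendre Dirichlet kernel. -/
theorem legKernel_tail_integral_bound (p : ℕ → Polynomial ℝ)
    (hp : IsOrthonormalLegendre p) :
    ∀ ε > (0:ℝ), ∃ c > (0:ℝ), ∀ n : ℕ, 1 ≤ n → ∀ x ∈ Set.Icc (-1 + ε) (1 - ε),
      (∫ s in (x + ((n:ℝ) - 1) * (1 - x) / (n:ℝ))..1, |LegKernel p n x s|) ≤
        c / (n:ℝ) ^ ((3:ℝ)/4) := by
  intro ε hε
  refine ⟨max 1 (4 / ε ^ (7 / 4 : ℝ) * (2 ^ (3 / 4 : ℝ) / (3 / 4))), by positivity,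
    fun n hn x hx => ?_⟩
  obtain rfl | hn2 := hn.eq_or_lt
  · have hK : ∀ s, |LegKernel p 1 x s| = 1 / 2 := fun s => by norm_num [hp.legKernel_eq]
    simp only [hK, intervalIntegral.integral_const, smul_eq_mul, Nat.cast_one, Real.one_rpow,
      div_one]
    exact le_trans (by nlinarith [hx.1]) (le_max_left _ _)
  · exact (hp.integral_abs_legKernel_tail_le hε hn2 hx).trans (by gcongr; exact le_max_right _ _)
end
end
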